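/- arXiv:2312.15427 — 8 statements merged into one kernel-verified Lean document; each statement's English description precedes it below -/
import Mathlib

section
/- Let p and \hat{p} be probability vectors on k ordered real values a_1 < ... < a_k with tail CDFs q_i = \sum_{j \ge i} p_j and \hat{q}_i = \sum_{j \ge i} \hat{p}_j, and let \epsilon \ge 0. If |\hat{q}_i - q_i| \le \epsilon for every i \in [k], then the \epsilon-shifted vector \bar{p} of \hat{p} stochastically dominates p: for every i \in [k], \sum_{j \ge i} \bar{p}_j \ge \sum_{j \ge i} p_j. -/
open Finset

/-- The `ε`-shifted vector of a probability vector `phat` on indices `1, …, k`. -/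
noncomputable def epsShifted (k : ℕ) (phat : ℕ → ℝ) (ε : ℝ) : ℕ → ℝ :=
  fun i =>
    if i = k then min (phat k + ε) 1
    else if min (phat k + ε) 1 = 1 then 0
    else
      let y := sInf {y : ℕ | ε ≤ ∑ j ∈ Finset.Icc 1 y, phat j}
      if i = y then (∑ j ∈ Finset.Icc 1 y, phat j) - ε
      else if y < i then phat i
      else 0

/-- If the tail CDFs of probability vectors `p` and `phat` on `k` ordered
real values are pointwise within `ε`, then the `ε`-shifted vector of `phat` stochastically
dominates `p`. -/
theorem epsShifted_stochasticallyDominates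
    (k : ℕ) (hk : 1 ≤ k) (a : ℕ → ℝ)
    (ha : ∀ i ∈ Finset.Icc 1 k, ∀ j ∈ Finset.Icc 1 k, i < j → a i < a j)
    (p phat : ℕ → ℝ)
    (hp : ∀ i ∈ Finset.Icc 1 k, 0 ≤ p i ∧ p i ≤ 1)
    (hp1 : ∑ i ∈ Finset.Icc 1 k, p i = 1)
    (hphat : ∀ i ∈ Finset.Icc 1 k, 0 ≤ phat i ∧ phat i ≤ 1)
    (hphat1 : ∑ i ∈ Finset.Icc 1 k, phat i = 1)
    (ε : ℝ) (hε : 0 ≤ ε)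
    (hclose : ∀ i ∈ Finset.Icc 1 k,
      |(∑ j ∈ Finset.Icc i k, phat j) - ∑ j ∈ Finset.Icc i k, p j| ≤ ε) :
    ∀ i ∈ Finset.Icc 1 k,
      ∑ j ∈ Finset.Icc i k, p j ≤ ∑ j ∈ Finset.Icc i k, epsShifted k phat ε j := by
  obtain ⟨m, rfl⟩ : ∃ m, k = m + 1 := ⟨k - 1, (Nat.succ_pred_eq_of_pos hk).symm⟩
  intro i hi
  rw [Finset.mem_Icc] at hi
  obtain ⟨hi1, hik⟩ := hi
  have hk_mem : m + 1 ∈ Finset.Icc i (m + 1) := Finset.mem_Icc.mpr ⟨hik, le_rfl⟩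
  have hptail : ∑ j ∈ Finset.Icc i (m + 1), p j ≤ 1 := by
    rw [← hp1]
    apply Finset.sum_le_sum_of_subset_of_nonneg (Finset.Icc_subset_Icc_left hi1)
    intro j hj _
    exact (hp j hj).1
  by_cases hone : min (phat (m + 1) + ε) 1 = 1
  · have hsum : ∑ j ∈ Finset.Icc i (m + 1), epsShifted (m + 1) phat ε j = 1 := by
      rw [Finset.sum_eq_single_of_mem (m + 1) hk_mem]
      · simp [epsShifted, hone]
      · intro j _ hjk
        simp [epsShifted, hjk, hone]
    linarith
  · have hlt : phat (m + 1) + ε < 1 := by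
      by_contra h
      push_neg at h
      exact hone (min_eq_right h)
    have hmin : min (phat (m + 1) + ε) 1 = phat (m + 1) + ε := min_eq_left hlt.le
    have hsplit1 : ∑ j ∈ Finset.Icc 1 (m + 1), phat j
        = ∑ j ∈ Finset.Icc 1 m, phat j + phat (m + 1) :=
      Finset.sum_Icc_succ_top (by omega) phat
    have hmS : m ∈ {y : ℕ | ε ≤ ∑ j ∈ Finset.Icc 1 y, phat j} := by
      simp only [Set.mem_setOf_eq]
      rw [hsplit1] at hphat1
      linarith
    have hIoc : ∀ n : ℕ, Finset.Icc 1 n = Finset.Ioc 0 n := by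
      intro n; ext x; simp [Finset.mem_Icc, Finset.mem_Ioc]; omega
    set y := sInf {y : ℕ | ε ≤ ∑ j ∈ Finset.Icc 1 y, phat j} with hy
    have hyS : ε ≤ ∑ j ∈ Finset.Icc 1 y, phat j := Nat.sInf_mem ⟨m, hmS⟩
    have hym : y ≤ m := Nat.sInf_le hmS
    have esh_top : epsShifted (m + 1) phat ε (m + 1) = phat (m + 1) + ε := by
      simp [epsShifted, hmin]
    have esh_mid : ∀ j, y < j → j ≤ m → epsShifted (m + 1) phat ε j = phat j := by
      intro j h1 h2
      simp only [epsShifted, ← hy]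
      rw [if_neg (by omega : ¬ j = m + 1), if_neg hone, if_neg (by omega : ¬ j = y),
        if_pos h1]
    have esh_y : y ≠ m + 1 → epsShifted (m + 1) phat ε y
        = (∑ j ∈ Finset.Icc 1 y, phat j) - ε := by
      intro hne
      simp only [epsShifted, ← hy]
      simp [hne, hone]
    have esh_lo : ∀ j, j < y → epsShifted (m + 1) phat ε j = 0 := by
      intro j hj
      simp only [epsShifted, ← hy]
      rw [if_neg (by omega : ¬ j = m + 1), if_neg hone, if_neg (by omega : ¬ j = y),
        if_neg (by omega : ¬ y < j)]
    rcases lt_or_ge y i with hyi | hiy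
    · -- i > y : tail of shifted = tail of phat + ε
      have hsum : ∑ j ∈ Finset.Icc i (m + 1), epsShifted (m + 1) phat ε j
          = ∑ j ∈ Finset.Icc i (m + 1), phat j + ε := by
        rw [Finset.sum_Icc_succ_top (by omega : i ≤ m + 1),
          Finset.sum_Icc_succ_top (by omega : i ≤ m + 1), esh_top]
        have : ∑ j ∈ Finset.Icc i m, epsShifted (m + 1) phat ε j
            = ∑ j ∈ Finset.Icc i m, phat j := by
          apply Finset.sum_congr rfl
          intro j hj
          rw [Finset.mem_Icc] at hj
          exact esh_mid j (by omega) hj.2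
        rw [this]; ring
      have hc := hclose i (Finset.mem_Icc.mpr ⟨hi1, hik⟩)
      rw [abs_le] at hc
      linarith [hc.1]
    · -- i ≤ y : tail of shifted = 1
      have hy1 : 1 ≤ y := le_trans hi1 hiy
      have hsum : ∑ j ∈ Finset.Icc i (m + 1), epsShifted (m + 1) phat ε j = 1 := by
        rw [Finset.sum_Icc_succ_top (by omega : i ≤ m + 1), esh_top]
        have h1 : ∑ j ∈ Finset.Icc i m, epsShifted (m + 1) phat ε j
            = ∑ j ∈ Finset.Icc 1 m, epsShifted (m + 1) phat ε j := by
          apply Finset.sum_subset (Finset.Icc_subset_Icc_left hi1)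
          intro j hj hj'
          rw [Finset.mem_Icc] at hj
          rw [Finset.mem_Icc] at hj'
          exact esh_lo j (by omega)
        have h2 : ∑ j ∈ Finset.Icc 1 m, epsShifted (m + 1) phat ε j
            = ∑ j ∈ Finset.Icc 1 y, epsShifted (m + 1) phat ε j
              + ∑ j ∈ Finset.Icc (y + 1) m, epsShifted (m + 1) phat ε j := by
          rw [hIoc, hIoc, Finset.Icc_add_one_left_eq_Ioc,
            Finset.sum_Ioc_consecutive _ (Nat.zero_le y) hym]
        have h3 : ∑ j ∈ Finset.Icc 1 y, epsShifted (m + 1) phat ε j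
            = (∑ j ∈ Finset.Icc 1 y, phat j) - ε := by
          rw [Finset.sum_eq_single_of_mem y (Finset.mem_Icc.mpr ⟨hy1, le_rfl⟩)]
          · exact esh_y (by omega)
          · intro j hj hjy
            rw [Finset.mem_Icc] at hj
            exact esh_lo j (by omega)
        have h4 : ∑ j ∈ Finset.Icc (y + 1) m, epsShifted (m + 1) phat ε j
            = ∑ j ∈ Finset.Icc (y + 1) m, phat j := by
          apply Finset.sum_congr rfl
          intro j hj
          rw [Finset.mem_Icc] at hj
          exact esh_mid j (by omega) hj.2
        have h5 : ∑ j ∈ Finset.Icc 1 y, phat j + ∑ j ∈ Finset.Icc (y + 1) m, phat j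
            = ∑ j ∈ Finset.Icc 1 m, phat j := by
          rw [hIoc, hIoc, Finset.Icc_add_one_left_eq_Ioc,
            Finset.sum_Ioc_consecutive _ (Nat.zero_le y) hym]
        rw [h1, h2, h3, h4]
        rw [hsplit1] at hphat1
        linarith
      linarith
end

section
/- For any probability vector \hat{p} on k ordered real values a_1 < ... < a_k and any \epsilon \in [0,1], the total variation distance between \hat{p} and its \epsilon-shifted vector \bar{p} satisfies (1/2) \sum_{i=1}^k |\bar{p}_i - \hat{p}_i| \le \epsilon. -/
open Finset

/-- For any probability vector `phat` on `k` ordered real values and any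
`ε ∈ [0,1]`, the total variation distance between `phat` and its `ε`-shifted vector is at
most `ε`. -/
theorem tvDist_epsShifted_le
    (k : ℕ) (hk : 1 ≤ k) (a : ℕ → ℝ)
    (ha : ∀ i ∈ Finset.Icc 1 k, ∀ j ∈ Finset.Icc 1 k, i < j → a i < a j)
    (phat : ℕ → ℝ)
    (hphat : ∀ i ∈ Finset.Icc 1 k, 0 ≤ phat i ∧ phat i ≤ 1)
    (hphat1 : ∑ i ∈ Finset.Icc 1 k, phat i = 1)
    (ε : ℝ) (hε0 : 0 ≤ ε) (hε1 : ε ≤ 1) :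
    (1 / 2) * ∑ i ∈ Finset.Icc 1 k, |epsShifted k phat ε i - phat i| ≤ ε := by
  obtain ⟨k', rfl⟩ : ∃ k', k = k' + 1 := ⟨k - 1, (Nat.succ_pred_eq_of_pos hk).symm⟩
  have hSsucc : ∀ y : ℕ, ∑ j ∈ Finset.Icc 1 (y + 1), phat j
      = (∑ j ∈ Finset.Icc 1 y, phat j) + phat (y + 1) := fun y =>
    Finset.sum_Icc_succ_top (Nat.succ_le_succ (Nat.zero_le y)) phat
  have hSk' : ∑ j ∈ Finset.Icc 1 k', phat j = 1 - phat (k' + 1) := by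
    have := hSsucc k'
    rw [hphat1] at this; linarith
  have hpk := hphat (k' + 1) (by simp)
  have key : ∑ i ∈ Finset.Icc 1 (k' + 1), |epsShifted (k' + 1) phat ε i - phat i|
      ≤ 2 * ε := by
    rw [Finset.sum_Icc_succ_top (by omega : 1 ≤ k' + 1)]
    by_cases hm : 1 ≤ phat (k' + 1) + ε
    · -- top gets mass 1
      have hmin : min (phat (k' + 1) + ε) 1 = 1 := min_eq_right hm
      have htop : |epsShifted (k' + 1) phat ε (k' + 1) - phat (k' + 1)|
          = 1 - phat (k' + 1) := by
        simp only [epsShifted]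
        rw [if_pos trivial, hmin, abs_of_nonneg (by linarith [hpk.2])]
      have hrest : ∀ i ∈ Finset.Icc 1 k',
          |epsShifted (k' + 1) phat ε i - phat i| = phat i := by
        intro i hi
        simp only [Finset.mem_Icc] at hi
        have hik : i ≠ k' + 1 := by omega
        have h0 : 0 ≤ phat i := (hphat i (by simp; omega)).1
        simp only [epsShifted]
        rw [if_neg hik, hmin, if_pos rfl, zero_sub, abs_neg, abs_of_nonneg h0]
      rw [htop, Finset.sum_congr rfl hrest, hSk']
      linarith
    · push_neg at hm
      have hmin : min (phat (k' + 1) + ε) 1 = phat (k' + 1) + ε := min_eq_left hm.le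
      have hmin1 : ¬ (min (phat (k' + 1) + ε) 1 = 1) := by rw [hmin]; intro h; linarith
      set y := sInf {y : ℕ | ε ≤ ∑ j ∈ Finset.Icc 1 y, phat j} with hydef
      have hk'Y : k' ∈ {y : ℕ | ε ≤ ∑ j ∈ Finset.Icc 1 y, phat j} := by
        simp only [Set.mem_setOf_eq, hSk']; linarith [hpk.1]
      have hyk' : y ≤ k' := Nat.sInf_le hk'Y
      have hySy : ε ≤ ∑ j ∈ Finset.Icc 1 y, phat j := Nat.sInf_mem ⟨k', hk'Y⟩
      have htop : |epsShifted (k' + 1) phat ε (k' + 1) - phat (k' + 1)| = ε := by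
        simp only [epsShifted]
        rw [if_pos trivial, hmin, add_sub_cancel_left, abs_of_nonneg hε0]
      rw [htop]
      clear_value y
      rcases Nat.eq_zero_or_pos y with hy0 | hy1
      · -- y = 0 forces ε = 0
        have hS0 : ∑ j ∈ Finset.Icc 1 y, phat j = 0 := by rw [hy0]; simp
        have hε : ε = 0 := le_antisymm (hS0 ▸ hySy) hε0
        have hrest : ∀ i ∈ Finset.Icc 1 k',
            |epsShifted (k' + 1) phat ε i - phat i| = 0 := by
          intro i hi
          simp only [Finset.mem_Icc] at hi
          have hik : i ≠ k' + 1 := by omega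
          simp only [epsShifted]
          rw [if_neg hik, if_neg hmin1, ← hydef, if_neg (by omega : ¬ i = y),
            if_pos (by omega : y < i), sub_self, abs_zero]
        rw [Finset.sum_congr rfl hrest]
        simp [hε]
      · obtain ⟨y', rfl⟩ : ∃ y', y = y' + 1 := ⟨y - 1, (Nat.succ_pred_eq_of_pos hy1).symm⟩
        have hSy' : ∑ j ∈ Finset.Icc 1 y', phat j < ε := by
          by_contra h
          push_neg at h
          have h2 : y' + 1 ≤ y' := by rw [hydef]; exact Nat.sInf_le h
          omega
        have hsub : ∑ i ∈ Finset.Icc 1 k', |epsShifted (k' + 1) phat ε i - phat i|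
            = ∑ i ∈ Finset.Icc 1 (y' + 1), |epsShifted (k' + 1) phat ε i - phat i| := by
          refine (Finset.sum_subset (Finset.Icc_subset_Icc_right hyk') ?_).symm
          intro i hi hni
          simp only [Finset.mem_Icc] at hi hni
          have hik : i ≠ k' + 1 := by omega
          simp only [epsShifted]
          rw [if_neg hik, if_neg hmin1, ← hydef, if_neg (by omega : ¬ i = y' + 1),
            if_pos (by omega : y' + 1 < i), sub_self, abs_zero]
        rw [hsub, Finset.sum_Icc_succ_top (by omega : 1 ≤ y' + 1)]
        have hyterm : |epsShifted (k' + 1) phat ε (y' + 1) - phat (y' + 1)|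
            = ε - ∑ j ∈ Finset.Icc 1 y', phat j := by
          have hik : y' + 1 ≠ k' + 1 := by omega
          simp only [epsShifted]
          rw [if_neg hik, if_neg hmin1, ← hydef, if_pos rfl]
          have h2 : (∑ j ∈ Finset.Icc 1 (y' + 1), phat j) - ε - phat (y' + 1)
              = (∑ j ∈ Finset.Icc 1 y', phat j) - ε := by
            rw [hSsucc y']; ring
          rw [h2, abs_of_nonpos (by linarith)]
          ring
        have hrest : ∀ i ∈ Finset.Icc 1 y',
            |epsShifted (k' + 1) phat ε i - phat i| = phat i := by
          intro i hi
          simp only [Finset.mem_Icc] at hi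
          have hik : i ≠ k' + 1 := by omega
          have h0 : 0 ≤ phat i := (hphat i (by simp; omega)).1
          simp only [epsShifted]
          rw [if_neg hik, if_neg hmin1, ← hydef, if_neg (by omega : ¬ i = y' + 1),
            if_neg (by omega : ¬ y' + 1 < i), zero_sub, abs_neg, abs_of_nonneg h0]
        rw [hyterm, Finset.sum_congr rfl hrest]
        linarith
  linarith
end

section
/- Let a < b be real numbers, let g : [a,b] \to \mathbb{R} be Borel measurable and of bounded variation on [a,b] with total variation V_a^b(g) and with g_max = \sup_{x \in [a,b]} |g(x)|. Let P and Q be Borel probability measures on \mathbb{R} with P([a,b]) = Q([a,b]) = 1. Then |\int_{[a,b]} g \, dP - \int_{[a,b]} g \, dQ| \le (2 g_max + V_a^b(g)) \cdot d_{KS}(P, Q). -/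
/-!
Writing `g = ((v + g) - (v - g)) / 2`, with `v` the variation of `g` from `a`, reduces the claim
to monotone integrands. For a monotone `H` with values in `[0, M]`, the layer cake formula gives
`∫ H dP - ∫ H dQ = ∫₀^M (P - Q) {H ≥ t} dt`, and every superlevel set of a monotone function is
a ray, on which `|P - Q|` is at most `d_KS(P, Q)` (for `[c, ∞)` after passing to the left limit of
the distribution functions). This already gives the sharper bound `V_a^b(g) · d_KS(P, Q)`.
-/

open MeasureTheory Set Filter Topology

theorem IsUpperSet.eq_Ioi_csInf_or_eq_Ici_csInf {α : Type*} [ConditionallyCompleteLinearOrder α]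
    {S : Set α} (hS : IsUpperSet S) (hne : S.Nonempty) (hbdd : BddBelow S) :
    S = Ioi (sInf S) ∨ S = Ici (sInf S) := by
  have hIoi : Ioi (sInf S) ⊆ S := fun x hx ↦
    let ⟨y, hy, hyx⟩ := exists_lt_of_csInf_lt hne hx
    hS hyx.le hy
  have hIci : S ⊆ Ici (sInf S) := fun x hx ↦ csInf_le hbdd hx
  by_cases hmem : sInf S ∈ S
  · exact Or.inr (hIci.antisymm (hS.Ici_subset hmem))
  · exact Or.inl (Subset.antisymm (fun x hx ↦ (hIci hx).lt_of_ne fun h ↦ hmem (h ▸ hx)) hIoi)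

theorem IsUpperSet.eq_univ_of_not_bddBelow {α : Type*} [LinearOrder α] {S : Set α}
    (hS : IsUpperSet S) (hbdd : ¬BddBelow S) : S = univ :=
  eq_univ_of_forall fun x ↦
    let ⟨_, hy, hyx⟩ := not_bddBelow_iff.1 hbdd x
    hS hyx.le hy

noncomputable def ksDist (P Q : Measure ℝ) : ℝ :=
  ⨆ x : ℝ, |P.real (Iic x) - Q.real (Iic x)|

namespace ksDist

variable {P Q : Measure ℝ}

theorem nonneg : 0 ≤ ksDist P Q :=
  Real.iSup_nonneg fun _ ↦ abs_nonneg _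

variable [IsProbabilityMeasure P] [IsProbabilityMeasure Q]

theorem abs_measureReal_Iic_sub_le (c : ℝ) :
    |P.real (Iic c) - Q.real (Iic c)| ≤ ksDist P Q := by
  refine le_ciSup (f := fun x ↦ |P.real (Iic x) - Q.real (Iic x)|) ⟨1, ?_⟩ c
  rintro _ ⟨x, rfl⟩
  exact abs_sub_le_of_nonneg_of_le measureReal_nonneg measureReal_le_one
    measureReal_nonneg measureReal_le_one

theorem abs_measureReal_Iio_sub_le (c : ℝ) :
    |P.real (Iio c) - Q.real (Iio c)| ≤ ksDist P Q := by
  obtain ⟨u, hu_mono, hu_lt, hu_lim⟩ := exists_seq_strictMono_tendsto c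
  have hunion : ⋃ n, Iic (u n) = Iio c := iUnion_Iic_eq_Iio_of_lt_of_tendsto hu_lt hu_lim
  have htendsto (μ : Measure ℝ) [IsFiniteMeasure μ] :
      Tendsto (fun n ↦ μ.real (Iic (u n))) atTop (𝓝 (μ.real (Iio c))) := by
    rw [← hunion]
    exact (ENNReal.tendsto_toReal (measure_ne_top _ _)).comp
      (tendsto_measure_iUnion_atTop fun _ _ h ↦ Iic_subset_Iic.2 (hu_mono.monotone h))
  exact le_of_tendsto' ((htendsto P).sub (htendsto Q)).abs fun n ↦ abs_measureReal_Iic_sub_le _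

theorem abs_measureReal_compl_sub {S : Set ℝ} (hS : MeasurableSet S) :
    |P.real Sᶜ - Q.real Sᶜ| = |P.real S - Q.real S| := by
  rw [probReal_compl_eq_one_sub hS, probReal_compl_eq_one_sub hS, ← abs_neg]
  ring_nf

theorem abs_measureReal_sub_le_of_isUpperSet {S : Set ℝ} (hS : IsUpperSet S) :
    |P.real S - Q.real S| ≤ ksDist P Q := by
  rcases S.eq_empty_or_nonempty with rfl | hne
  · simpa using nonneg
  by_cases hbdd : BddBelow S
  · rcases hS.eq_Ioi_csInf_or_eq_Ici_csInf hne hbdd with h | h <;> rw [h]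
    · rw [← compl_Iic, abs_measureReal_compl_sub measurableSet_Iic]
      exact abs_measureReal_Iic_sub_le _
    · rw [← compl_Iio, abs_measureReal_compl_sub measurableSet_Iio]
      exact abs_measureReal_Iio_sub_le _
  · simpa [hS.eq_univ_of_not_bddBelow hbdd] using nonneg

end ksDist

section

variable {P Q : Measure ℝ} [IsProbabilityMeasure P] [IsProbabilityMeasure Q]

theorem abs_integral_sub_le_of_monotone {H : ℝ → ℝ} (hH : Monotone H) {M : ℝ}
    (hH_nonneg : ∀ x, 0 ≤ H x) (hH_le : ∀ x, H x ≤ M) :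
    |∫ x, H x ∂P - ∫ x, H x ∂Q| ≤ M * ksDist P Q := by
  have hM : 0 ≤ M := (hH_nonneg 0).trans (hH_le 0)
  have hlayer (μ : Measure ℝ) [IsProbabilityMeasure μ] :
      ∫ x, H x ∂μ = ∫ t in Ioc 0 M, μ.real {x | t ≤ H x} := by
    refine Integrable.integral_eq_integral_Ioc_meas_le ?_ (ae_of_all _ hH_nonneg)
      (ae_of_all _ hH_le)
    refine Integrable.of_bound hH.measurable.aestronglyMeasurable M (ae_of_all _ fun x ↦ ?_)
    rw [Real.norm_of_nonneg (hH_nonneg x)]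
    exact hH_le x
  have hintegrable (μ : Measure ℝ) [IsProbabilityMeasure μ] :
      IntegrableOn (fun t ↦ μ.real {x | t ≤ H x}) (Ioc 0 M) := by
    have hanti : Antitone fun t ↦ μ.real {x | t ≤ H x} :=
      fun _ _ hst ↦ measureReal_mono fun _ hx ↦ hst.trans hx
    exact (hanti.antitoneOn _ |>.integrableOn_isCompact isCompact_Icc).mono_set
      Ioc_subset_Icc_self
  rw [hlayer P, hlayer Q, ← integral_sub (hintegrable P) (hintegrable Q)]
  calc ‖∫ t in Ioc 0 M, (P.real {x | t ≤ H x} - Q.real {x | t ≤ H x})‖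
      ≤ ksDist P Q * volume.real (Ioc 0 M) :=
        norm_setIntegral_le_of_norm_le_const measure_Ioc_lt_top fun t _ ↦
          ksDist.abs_measureReal_sub_le_of_isUpperSet fun _ _ hxy hx ↦ hx.trans (hH hxy)
    _ = M * ksDist P Q := by rw [Real.volume_real_Ioc_of_le hM, sub_zero, mul_comm]

theorem restrict_eq_self_of_measure_eq_one {α : Type*} [MeasurableSpace α] {μ : Measure α}
    [IsProbabilityMeasure μ] {s : Set α} (hs : MeasurableSet s) (hμs : μ s = 1) : μ.restrict s = μ :=
  Measure.restrict_eq_self_of_ae_mem (mem_ae_iff.2 ((prob_compl_eq_zero_iff hs).2 hμs))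

theorem abs_setIntegral_Icc_sub_le_of_monotoneOn {a b : ℝ} (hab : a ≤ b) {h : ℝ → ℝ}
    (hh : MonotoneOn h (Icc a b)) (hP : P (Icc a b) = 1) (hQ : Q (Icc a b) = 1) :
    |∫ x in Icc a b, h x ∂P - ∫ x in Icc a b, h x ∂Q| ≤ (h b - h a) * ksDist P Q := by
  set H : ℝ → ℝ := fun x ↦ h (projIcc a b hab x) - h a
  have ha : a ∈ Icc a b := left_mem_Icc.2 hab
  have hb : b ∈ Icc a b := right_mem_Icc.2 hab
  have hH : Monotone H := fun x y hxy ↦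
    sub_le_sub_right (hh (projIcc a b hab x).2 (projIcc a b hab y).2 (monotone_projIcc hab hxy)) _
  have hrepr (μ : Measure ℝ) [IsProbabilityMeasure μ] (hμ : μ (Icc a b) = 1) :
      ∫ x in Icc a b, h x ∂μ = ∫ x, H x ∂μ + h a := by
    have hrestrict := restrict_eq_self_of_measure_eq_one measurableSet_Icc hμ
    have hint : Integrable H μ := by
      simpa only [IntegrableOn, hrestrict] using
        (hH.monotoneOn (Icc a b)).integrableOn_isCompact (μ := μ) isCompact_Icc
    calc ∫ x in Icc a b, h x ∂μ = ∫ x in Icc a b, (H x + h a) ∂μ :=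
          setIntegral_congr_fun measurableSet_Icc fun x hx ↦ by simp [H, projIcc_of_mem hab hx]
      _ = ∫ x, H x ∂μ + h a := by
          rw [hrestrict, integral_add hint (integrable_const _), integral_const, probReal_univ,
            one_smul]
  rw [hrepr P hP, hrepr Q hQ, add_sub_add_right_eq_sub]
  exact abs_integral_sub_le_of_monotone hH
    (fun x ↦ sub_nonneg.2 (hh ha (projIcc a b hab x).2 (projIcc a b hab x).2.1))
    (fun x ↦ sub_le_sub_right (hh (projIcc a b hab x).2 hb (projIcc a b hab x).2.2) _)

end

theorem abs_setIntegral_Icc_sub_le_eVariationOn_mul_ksDist {P Q : Measure ℝ}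
    [IsProbabilityMeasure P] [IsProbabilityMeasure Q] {a b : ℝ} (hab : a ≤ b) {g : ℝ → ℝ}
    (hg : BoundedVariationOn g (Icc a b)) (hP : P (Icc a b) = 1) (hQ : Q (Icc a b) = 1) :
    |∫ x in Icc a b, g x ∂P - ∫ x in Icc a b, g x ∂Q| ≤
      (eVariationOn g (Icc a b)).toReal * ksDist P Q := by
  have ha : a ∈ Icc a b := left_mem_Icc.2 hab
  have hv_a : variationOnFromTo g (Icc a b) a a = 0 := variationOnFromTo.self g _ a
  have hv_b : variationOnFromTo g (Icc a b) a b = (eVariationOn g (Icc a b)).toReal := by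
    rw [variationOnFromTo.eq_of_le g _ hab, inter_self]
  set v := variationOnFromTo g (Icc a b) a
  have hloc : LocallyBoundedVariationOn g (Icc a b) := hg.locallyBoundedVariationOn
  have hplus : MonotoneOn (v + g) (Icc a b) := variationOnFromTo.add_self_monotoneOn hloc ha
  have hminus : MonotoneOn (v - g) (Icc a b) := variationOnFromTo.sub_self_monotoneOn hloc ha
  have hsplit (μ : Measure ℝ) [IsProbabilityMeasure μ] :
      ∫ x in Icc a b, g x ∂μ =
        (∫ x in Icc a b, (v + g) x ∂μ - ∫ x in Icc a b, (v - g) x ∂μ) / 2 := by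
    rw [← integral_sub (hplus.integrableOn_isCompact isCompact_Icc)
      (hminus.integrableOn_isCompact isCompact_Icc), ← integral_div]
    congr 1 with x
    simp only [Pi.add_apply, Pi.sub_apply]
    ring
  have hbound_plus := abs_setIntegral_Icc_sub_le_of_monotoneOn hab hplus hP hQ
  have hbound_minus := abs_setIntegral_Icc_sub_le_of_monotoneOn hab hminus hP hQ
  rw [hsplit P, hsplit Q, ← sub_div, abs_div, abs_two, div_le_iff₀ two_pos]
  calc |(∫ x in Icc a b, (v + g) x ∂P - ∫ x in Icc a b, (v - g) x ∂P) -
        (∫ x in Icc a b, (v + g) x ∂Q - ∫ x in Icc a b, (v - g) x ∂Q)|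
      ≤ |∫ x in Icc a b, (v + g) x ∂P - ∫ x in Icc a b, (v + g) x ∂Q| +
          |∫ x in Icc a b, (v - g) x ∂P - ∫ x in Icc a b, (v - g) x ∂Q| := by
        rw [sub_sub_sub_comm]; exact abs_sub _ _
    _ ≤ ((v + g) b - (v + g) a) * ksDist P Q + ((v - g) b - (v - g) a) * ksDist P Q :=
        add_le_add hbound_plus hbound_minus
    _ = (eVariationOn g (Icc a b)).toReal * ksDist P Q * 2 := by
        simp only [Pi.add_apply, Pi.sub_apply, hv_a, ← hv_b]
        ring

theorem integral_diff_le_of_boundedVariation_general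
    (a b : ℝ) (hab : a < b) (g : ℝ → ℝ)
    (hgBV : BoundedVariationOn g (Set.Icc a b))
    (P Q : Measure ℝ) [IsProbabilityMeasure P] [IsProbabilityMeasure Q]
    (hP : P (Set.Icc a b) = 1) (hQ : Q (Set.Icc a b) = 1) :
    |(∫ x in Set.Icc a b, g x ∂P) - ∫ x in Set.Icc a b, g x ∂Q| ≤
      (2 * sSup ((fun x => |g x|) '' Set.Icc a b)
          + (eVariationOn g (Set.Icc a b)).toReal) *
        ⨆ x : ℝ, |(P (Set.Iic x)).toReal - (Q (Set.Iic x)).toReal| := by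
  have hsup_nonneg : 0 ≤ sSup ((fun x => |g x|) '' Icc a b) :=
    Real.sSup_nonneg (forall_mem_image.2 fun x _ ↦ abs_nonneg (g x))
  calc |(∫ x in Icc a b, g x ∂P) - ∫ x in Icc a b, g x ∂Q|
      ≤ (eVariationOn g (Icc a b)).toReal * ksDist P Q :=
        abs_setIntegral_Icc_sub_le_eVariationOn_mul_ksDist hab.le hgBV hP hQ
    _ ≤ (2 * sSup ((fun x => |g x|) '' Icc a b) + (eVariationOn g (Icc a b)).toReal) *
          ksDist P Q := by
        gcongr
        · exact ksDist.nonneg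
        · linarith

/-- Let `g : [a,b] → ℝ` be Borel measurable and of bounded variation with
total variation `V_a^b(g)` and `g_max = sup_{x ∈ [a,b]} |g x|`. For Borel probability
measures `P, Q` concentrated on `[a,b]`,
`|∫_{[a,b]} g dP - ∫_{[a,b]} g dQ| ≤ (2 g_max + V_a^b(g)) · d_KS(P, Q)`. -/
theorem integral_diff_le_of_boundedVariation
    (a b : ℝ) (hab : a < b) (g : ℝ → ℝ) (hgmeas : Measurable g)
    (hgBV : BoundedVariationOn g (Set.Icc a b))
    (P Q : Measure ℝ) [IsProbabilityMeasure P] [IsProbabilityMeasure Q]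
    (hP : P (Set.Icc a b) = 1) (hQ : Q (Set.Icc a b) = 1) :
    |(∫ x in Set.Icc a b, g x ∂P) - ∫ x in Set.Icc a b, g x ∂Q| ≤
      (2 * sSup ((fun x => |g x|) '' Set.Icc a b)
          + (eVariationOn g (Set.Icc a b)).toReal) *
        ⨆ x : ℝ, |(P (Set.Iic x)).toReal - (Q (Set.Iic x)).toReal| :=
  integral_diff_le_of_boundedVariation_general a b hab g hgBV P Q hP hQ
end

section
/- Let p be a probability vector on k ordered real values a_1 < ... < a_k with tail CDF q_c = \sum_{b \ge c} p_b. Fix numbers \hat{p}_1, ..., \hat{p}_k \in [0,1] and \epsilon_1, ..., \epsilon_k \ge 0 with |\hat{p}_c - q_c| \le \epsilon_c for every c \in [k], and let E_1, ..., E_k be given by the censored-feedback recursion. Then for every c \in [k], E_c stochastically dominates the truncation D_c of p at a_c: for every b \le c, \sum_{j = b}^{c} E_c(j) \ge \sum_{j=b}^{c} D_c(j), where D_c(j) = p_j for j < c and D_c(c) = q_c. -/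
open Finset

/-- The censored-feedback recursion. -/
noncomputable def censoredRec (phat eps : ℕ → ℝ) : ℕ → ℕ → ℝ
  | 0 => fun _ => 0
  | 1 => fun b => if b = 1 then 1 else 0
  | (c + 2) => fun b =>
      if b = c + 2 then min (censoredRec phat eps (c + 1) (c + 1)) (phat (c + 2) + eps (c + 2))
      else if b = c + 1 then
        censoredRec phat eps (c + 1) (c + 1)
          - min (censoredRec phat eps (c + 1) (c + 1)) (phat (c + 2) + eps (c + 2))
      else censoredRec phat eps (c + 1) b

/-- The truncation at level `c` of a probability vector `p` on `{1, …, k}`: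
the distribution of `min(X, a_c)`, i.e. `D_c j = p j` for `j < c` and `D_c c = q_c`. -/
noncomputable def truncAt (p : ℕ → ℝ) (k c : ℕ) : ℕ → ℝ :=
  fun j => if j = c then ∑ b ∈ Finset.Icc c k, p b else p j

lemma sum_Icc_split (b c k : ℕ) (hb : b ≤ c) (hc : c ≤ k) (f : ℕ → ℝ) :
    ∑ i ∈ Icc b k, f i = ∑ i ∈ Icc b c, f i + ∑ i ∈ Icc (c+1) k, f i := by
  rw [← Finset.sum_union (by rw [Finset.disjoint_left]; intro x; simp; omega)]
  congr 1; ext x; simp; omega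

lemma sum_Icc_bot (b k : ℕ) (hb : b ≤ k) (f : ℕ → ℝ) :
    ∑ i ∈ Icc b k, f i = f b + ∑ i ∈ Icc (b+1) k, f i := by
  rw [show Icc b k = insert b (Icc (b+1) k) by ext x; simp; omega, Finset.sum_insert (by simp)]

lemma sum_trunc (p : ℕ → ℝ) (k c b : ℕ) (hb1 : 1 ≤ b) (hb : b ≤ c) (hc : c ≤ k) :
    ∑ j ∈ Icc b c, truncAt p k c j = ∑ j ∈ Icc b k, p j := by
  rw [show Icc b c = insert c (Icc b (c-1)) by ext x; simp; omega,
      Finset.sum_insert (by simp; omega)]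
  have h1 : truncAt p k c c = ∑ j ∈ Icc c k, p j := by simp [truncAt]
  have h2 : ∑ j ∈ Icc b (c-1), truncAt p k c j = ∑ j ∈ Icc b (c-1), p j := by
    refine Finset.sum_congr rfl fun j hj => ?_
    simp only [Finset.mem_Icc] at hj
    simp [truncAt, show j ≠ c by omega]
  rw [h1, h2, show Icc b k = Icc b (c-1) ∪ Icc c k by ext x; simp; omega,
      Finset.sum_union (by rw [Finset.disjoint_left]; intro x; simp; omega)]
  ring

lemma censoredRec_lt (phat eps : ℕ → ℝ) (c b : ℕ) (hb : b ≤ c) :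
    censoredRec phat eps (c+2) b = censoredRec phat eps (c+1) b := by
  have h1 : b ≠ c + 2 := by omega
  have h2 : b ≠ c + 1 := by omega
  simp [censoredRec, h1, h2]

lemma sum_censoredRec_step (phat eps : ℕ → ℝ) (c b : ℕ) (hb : b ≤ c + 1) :
    ∑ j ∈ Icc b (c+2), censoredRec phat eps (c+2) j
      = ∑ j ∈ Icc b (c+1), censoredRec phat eps (c+1) j := by
  rw [Finset.sum_Icc_succ_top (by omega : b ≤ c + 2),
      Finset.sum_Icc_succ_top (by omega : b ≤ c + 1),
      Finset.sum_Icc_succ_top (by omega : b ≤ c + 1)]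
  have hsum : ∑ j ∈ Icc b c, censoredRec phat eps (c+2) j
      = ∑ j ∈ Icc b c, censoredRec phat eps (c+1) j := by
    refine Finset.sum_congr rfl fun j hj => ?_
    exact censoredRec_lt phat eps c j (by simp at hj; omega)
  rw [hsum]
  have h1 : censoredRec phat eps (c+2) (c+1)
      = censoredRec phat eps (c+1) (c+1)
        - min (censoredRec phat eps (c+1) (c+1)) (phat (c+2) + eps (c+2)) := by
    simp [censoredRec]
  have h2 : censoredRec phat eps (c+2) (c+2)
      = min (censoredRec phat eps (c+1) (c+1)) (phat (c+2) + eps (c+2)) := by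
    simp [censoredRec]
  rw [h1, h2]; ring

/-- If `|phat_c - q_c| ≤ eps_c` for every `c`, then each `E_c` produced
by the censored-feedback recursion stochastically dominates the truncation `D_c` of `p`. -/
theorem censoredRec_stochasticallyDominates_trunc
    (k : ℕ) (hk : 1 ≤ k) (a : ℕ → ℝ)
    (ha : ∀ i ∈ Finset.Icc 1 k, ∀ j ∈ Finset.Icc 1 k, i < j → a i < a j)
    (p : ℕ → ℝ)
    (hp : ∀ i ∈ Finset.Icc 1 k, 0 ≤ p i ∧ p i ≤ 1)
    (hp1 : ∑ i ∈ Finset.Icc 1 k, p i = 1)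
    (phat eps : ℕ → ℝ)
    (hphat : ∀ c ∈ Finset.Icc 1 k, 0 ≤ phat c ∧ phat c ≤ 1)
    (heps : ∀ c ∈ Finset.Icc 1 k, 0 ≤ eps c)
    (hclose : ∀ c ∈ Finset.Icc 1 k, |phat c - ∑ b ∈ Finset.Icc c k, p b| ≤ eps c) :
    ∀ c ∈ Finset.Icc 1 k, ∀ b ∈ Finset.Icc 1 c,
      ∑ j ∈ Finset.Icc b c, truncAt p k c j ≤ ∑ j ∈ Finset.Icc b c, censoredRec phat eps c j := by
  -- main induction: tail sums of E dominate tail CDF of p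
  have key : ∀ c, 1 ≤ c → c ≤ k → ∀ b, 1 ≤ b → b ≤ c →
      ∑ j ∈ Icc b k, p j ≤ ∑ j ∈ Icc b c, censoredRec phat eps c j := by
    intro c hc1
    induction c, hc1 using Nat.le_induction with
    | base =>
      intro _ b hb1 hb2
      have hb : b = 1 := by omega
      subst hb
      have : ∑ j ∈ Icc 1 1, censoredRec phat eps 1 j = 1 := by simp [censoredRec]
      rw [this, hp1]
    | succ n hn ih =>
      intro hnk b hb1 hb2
      obtain ⟨m, rfl⟩ : ∃ m, n = m + 1 := ⟨n - 1, by omega⟩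
      rcases Nat.lt_or_ge b (m + 2) with hblt | hbge
      · rw [sum_censoredRec_step phat eps m b (by omega)]
        exact ih (by omega) b hb1 (by omega)
      · have hb : b = m + 2 := by omega
        subst hb
        have htop : ∑ j ∈ Icc (m+2) (m+2), censoredRec phat eps (m+2) j
            = min (censoredRec phat eps (m+1) (m+1)) (phat (m+2) + eps (m+2)) := by
          rw [Finset.Icc_self, Finset.sum_singleton]
          simp [censoredRec]
        rw [htop]
        refine le_min ?_ ?_
        · have h1 : ∑ j ∈ Icc (m+1) k, p j ≤ censoredRec phat eps (m+1) (m+1) := by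
            have := ih (by omega) (m+1) (by omega) le_rfl
            rwa [Finset.Icc_self, Finset.sum_singleton] at this
          have h2 : ∑ j ∈ Icc (m+2) k, p j ≤ ∑ j ∈ Icc (m+1) k, p j := by
            rw [sum_Icc_bot (m+1) k (by omega)]
            have : 0 ≤ p (m+1) := (hp (m+1) (by simp; omega)).1
            linarith
          linarith
        · have hc := hclose (m+2) (by simp; omega)
          rw [abs_le] at hc
          linarith [hc.1]
  intro c hc b hb
  simp only [Finset.mem_Icc] at hc hb
  rw [sum_trunc p k c b hb.1 hb.2 hc.2]
  exact key c hc.1 hc.2 b hb.1 hb.2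
end

section
/- Let p be a probability vector on k ordered real values a_1 < ... < a_k with tail CDF q_c = \sum_{b \ge c} p_b. Fix numbers \hat{p}_1, ..., \hat{p}_k \in [0,1] and 0 \le \epsilon_1 \le \epsilon_2 \le ... \le \epsilon_k with |\hat{p}_c - q_c| \le \epsilon_c for every c \in [k], and let E_1, ..., E_k be given by the censored-feedback recursion. Then for every c \in [k], the total variation distance between E_c and the truncation D_c of p at a_c satisfies (1/2) \sum_{b=1}^{c} |E_c(b) - D_c(b)| \le (2c - 1) \epsilon_c. -/
open Finset

lemma censoredRec_succ (phat eps : ℕ → ℝ) (c : ℕ) (hc : 1 ≤ c) (b : ℕ) :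
    censoredRec phat eps (c+1) b =
      if b = c+1 then min (censoredRec phat eps c c) (phat (c+1) + eps (c+1))
      else if b = c then
        censoredRec phat eps c c - min (censoredRec phat eps c c) (phat (c+1) + eps (c+1))
      else censoredRec phat eps c b := by
  cases c with
  | zero => omega
  | succ d => rfl

lemma sum_Icc_bot_split {c k : ℕ} (h : c ≤ k) (p : ℕ → ℝ) :
    ∑ b ∈ Icc c k, p b = p c + ∑ b ∈ Icc (c+1) k, p b := by
  rw [Finset.Icc_add_one_left_eq_Ioc, ← Finset.Icc_erase_left, Finset.add_sum_erase _ _ (by simp [h])]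

/-- Auxiliary: the top coordinate is always within `2 * eps c` of the tail CDF. -/
lemma censoredRec_top_close (k : ℕ) (p phat eps : ℕ → ℝ)
    (hp : ∀ i ∈ Finset.Icc 1 k, 0 ≤ p i ∧ p i ≤ 1)
    (hp1 : ∑ i ∈ Finset.Icc 1 k, p i = 1)
    (heps0 : 0 ≤ eps 1)
    (hepsmono : ∀ c ∈ Finset.Icc 1 k, ∀ c' ∈ Finset.Icc 1 k, c ≤ c' → eps c ≤ eps c')
    (hclose : ∀ c ∈ Finset.Icc 1 k, |phat c - ∑ b ∈ Finset.Icc c k, p b| ≤ eps c) :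
    ∀ c, 1 ≤ c → c ≤ k →
      |censoredRec phat eps c c - ∑ b ∈ Finset.Icc c k, p b| ≤ 2 * eps c := by
  intro c hc
  induction c, hc using Nat.le_induction with
  | base =>
    intro _
    simp [censoredRec, hp1, heps0]
  | succ c hc ih =>
    intro hck
    have hck' : c ≤ k := by omega
    have hIH := ih hck'
    have hq : ∑ b ∈ Icc c k, p b = p c + ∑ b ∈ Icc (c+1) k, p b := sum_Icc_bot_split hck' p
    have hpc : 0 ≤ p c := (hp c (by simp; omega)).1
    have hclose' := hclose (c+1) (by simp; omega)
    have hmono : eps c ≤ eps (c+1) :=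
      hepsmono c (by simp; omega) (c+1) (by simp; omega) (by omega)
    rw [censoredRec_succ phat eps c hc (c+1), if_pos rfl]
    rw [abs_le] at *
    constructor
    · have h1 : min (censoredRec phat eps c c) (phat (c+1) + eps (c+1))
          ≥ (∑ b ∈ Icc (c+1) k, p b) - 2 * eps (c+1) := by
        apply le_min
        · nlinarith [hIH.1, hclose'.1, hclose'.2]
        · linarith [hclose'.2]
      linarith
    · have h2 : min (censoredRec phat eps c c) (phat (c+1) + eps (c+1))
          ≤ phat (c+1) + eps (c+1) := min_le_right _ _
      linarith [hclose'.1]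

/-- If `|phat_c - q_c| ≤ eps_c` with nondecreasing widths `eps_c`, then
the total variation distance between `E_c` and the truncation `D_c` of `p` is at most
`(2c - 1) eps_c` for every `c ∈ [k]`. -/
theorem tvDist_censoredRec_trunc_le
    (k : ℕ) (hk : 1 ≤ k) (a : ℕ → ℝ)
    (ha : ∀ i ∈ Finset.Icc 1 k, ∀ j ∈ Finset.Icc 1 k, i < j → a i < a j)
    (p : ℕ → ℝ)
    (hp : ∀ i ∈ Finset.Icc 1 k, 0 ≤ p i ∧ p i ≤ 1)
    (hp1 : ∑ i ∈ Finset.Icc 1 k, p i = 1)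
    (phat eps : ℕ → ℝ)
    (hphat : ∀ c ∈ Finset.Icc 1 k, 0 ≤ phat c ∧ phat c ≤ 1)
    (heps0 : 0 ≤ eps 1)
    (hepsmono : ∀ c ∈ Finset.Icc 1 k, ∀ c' ∈ Finset.Icc 1 k, c ≤ c' → eps c ≤ eps c')
    (hclose : ∀ c ∈ Finset.Icc 1 k, |phat c - ∑ b ∈ Finset.Icc c k, p b| ≤ eps c) :
    ∀ c ∈ Finset.Icc 1 k,
      (1 / 2) * ∑ b ∈ Finset.Icc 1 c, |censoredRec phat eps c b - truncAt p k c b|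
        ≤ (2 * (c : ℝ) - 1) * eps c := by
  have top := censoredRec_top_close k p phat eps hp hp1 heps0 hepsmono hclose
  have main : ∀ c, 1 ≤ c → c ≤ k →
      (∑ b ∈ Finset.Icc 1 c, |censoredRec phat eps c b - truncAt p k c b|)
        ≤ 2 * ((2 * (c : ℝ) - 1) * eps c) := by
    intro c hc
    induction c, hc using Nat.le_induction with
    | base =>
      intro _
      simp [censoredRec, truncAt, hp1]
      linarith
    | succ c hc ih =>
      intro hck
      have hck' : c ≤ k := by omega
      have hIH := ih hck'
      set E := censoredRec phat eps with hE
      set m := min (E c c) (phat (c+1) + eps (c+1)) with hm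
      have hEsucc : ∀ b, E (c+1) b =
          if b = c+1 then m else if b = c then E c c - m else E c b :=
        censoredRec_succ phat eps c hc
      -- top coordinate bounds
      have hmq : |m - ∑ b ∈ Icc (c+1) k, p b| ≤ 2 * eps (c+1) := by
        have := top (c+1) (by omega) hck
        rwa [hEsucc (c+1), if_pos rfl] at this
      have hEq : |E c c - ∑ b ∈ Icc c k, p b| ≤ 2 * eps c := top c hc hck'
      have hq : ∑ b ∈ Icc c k, p b = p c + ∑ b ∈ Icc (c+1) k, p b := sum_Icc_bot_split hck' p
      have hmono : eps c ≤ eps (c+1) :=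
        hepsmono c (by simp; omega) (c+1) (by simp; omega) (by omega)
      have hepsnn : 0 ≤ eps (c+1) := le_trans heps0
        (hepsmono 1 (by simp; omega) (c+1) (by simp; omega) (by omega))
      set f : ℕ → ℝ := fun b => |E (c+1) b - truncAt p k (c+1) b| with hf
      set g : ℕ → ℝ := fun b => |E c b - truncAt p k c b| with hg
      have hcmem : c ∈ Icc 1 c := by simp [hc]
      -- split the sums
      have hsplit : ∑ b ∈ Icc 1 (c+1), f b = (∑ b ∈ Icc 1 c, f b) + f (c+1) := by
        rw [Finset.sum_Icc_succ_top (by omega)]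
      have hfg : ∀ b ∈ (Icc 1 c).erase c, f b = g b := by
        intro b hb
        simp only [Finset.mem_erase, Finset.mem_Icc] at hb
        have hb1 : b ≠ c + 1 := by omega
        have hb2 : b ≠ c := hb.1
        simp [hf, hg, hEsucc b, hb1, hb2, truncAt]
      have hsum : ∑ b ∈ Icc 1 c, f b = (∑ b ∈ Icc 1 c, g b) - g c + f c := by
        rw [← Finset.sum_erase_add (Icc 1 c) f hcmem, ← Finset.sum_erase_add (Icc 1 c) g hcmem,
          Finset.sum_congr rfl hfg]
        ring
      have hfc : f c = |E c c - m - p c| := by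
        have : c ≠ c + 1 := by omega
        simp [hf, hEsucc c, this, truncAt]
      have hfc1 : f (c+1) = |m - ∑ b ∈ Icc (c+1) k, p b| := by
        simp [hf, hEsucc (c+1), truncAt]
      have hfcle : f c ≤ g c + |m - ∑ b ∈ Icc (c+1) k, p b| := by
        rw [hfc]
        have heq : E c c - m - p c
            = (E c c - ∑ b ∈ Icc c k, p b) - (m - ∑ b ∈ Icc (c+1) k, p b) := by
          rw [hq]; ring
        rw [heq]
        have hgc : g c = |E c c - ∑ b ∈ Icc c k, p b| := by simp [hg, truncAt]
        rw [hgc]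
        exact abs_sub _ _
      have hgc : g c = |E c c - ∑ b ∈ Icc c k, p b| := by simp [hg, truncAt]
      have hc1 : (1 : ℝ) ≤ (c : ℝ) := by exact_mod_cast hc
      have htail : (2 * (c : ℝ) - 1) * eps c ≤ (2 * (c : ℝ) - 1) * eps (c+1) := by
        apply mul_le_mul_of_nonneg_left hmono; linarith
      rw [hsplit, hsum, hfc1]
      push_cast
      nlinarith [hmq, hIH, hfcle]
  intro c hcmem
  simp only [Finset.mem_Icc] at hcmem
  have := main c hcmem.1 hcmem.2
  linarith
end

section
/- Let D be a distribution on real values a_1 < ... < a_k with pmf p and tail CDF q_c = \sum_{b \ge c} p_b, and let \delta \in (0,1). For each c \in [k], suppose we observe m_c i.i.d. censored samples of the form \min(X, a_c) with X \sim D, all samples mutually independent; let n_c = \sum_{b \ge c} m_b be the effective number of samples at level c (every sample censored at level b \ge c yields a sample of \min(X, a_c)), let \hat{p}_c be the fraction of these n_c effective samples that equal a_c (equivalently, whose underlying X satisfies X \ge a_c), and set \epsilon_c = \sqrt{\log(2k/\delta)/(2 n_c)}. Let E = E_k be the output of the censored-feedback recursion with inputs \hat{p}_c and \epsilon_c. Then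 with probability at least 1 - \delta: (i) E stochastically dominates p, i.e. \sum_{j \ge b} E(j) \ge \sum_{j \ge b} p_j for every b \in [k]; and (ii) for every c \in [k], the total variation distance between the truncation of E at a_c and the truncation D_c of p at a_c is less than k \sqrt{2 \log(2k/\delta)/m_c}. -/
/-!
On the event that every empirical tail estimate `p̂_c` is within `ε_c` of `q_c`, which by
Hoeffding's inequality fails at level `c` with probability at most `2 exp (-2 n_c ε_c²) = δ / k`,
the running tail mass `E_c(c) = ∑_{j ≥ c} E_k(j)` of the recursion stays in `[q_c, q_c + 2 ε_c]`:
it is a running minimum of the upper confidence bounds `p̂_c + ε_c ≥ q_c`, and `q` is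
nonincreasing. The lower bound is the domination. Every atom of a truncation is a difference of
two consecutive tail sums (the top atom is one tail sum), which gives the total variation bound
because `2 ε_b ≤ √(2 log (2k/δ) / m_c)` for `b ≤ c`, as `n_b ≥ m_c`.
-/

open Finset MeasureTheory ProbabilityTheory

namespace ProbabilityTheory

variable {Ω ι : Type*} [MeasurableSpace Ω] {μ : Measure Ω}

lemma measureReal_le_abs_sum_sub_integral_le [IsProbabilityMeasure μ] {X : ι → Ω → ℝ}
    (h_indep : iIndepFun X μ) (h_meas : ∀ i, Measurable (X i))
    (h_bdd : ∀ i ω, X i ω ∈ Set.Icc (0 : ℝ) 1) (s : Finset ι) {ε : ℝ} (hε : 0 ≤ ε) :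
    μ.real {ω | ε ≤ |∑ i ∈ s, (X i ω - μ[X i])|} ≤ 2 * Real.exp (-2 * ε ^ 2 / #s) := by
  have h_subG : ∀ i ∈ s,
      HasSubgaussianMGF (fun ω ↦ X i ω - μ[X i]) ((‖(1 : ℝ) - 0‖₊ / 2) ^ 2) μ :=
    fun i _ ↦ hasSubgaussianMGF_of_mem_Icc (h_meas i).aemeasurable (ae_of_all _ (h_bdd i))
  have h_indep' : iIndepFun (fun i ω ↦ X i ω - μ[X i]) μ :=
    h_indep.comp (fun (i : ι) (y : ℝ) ↦ y - ∫ ω, X i ω ∂μ) fun _ ↦ measurable_id.sub_const _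
  have h_tail : ∀ Z : ι → Ω → ℝ, iIndepFun Z μ →
      (∀ i ∈ s, HasSubgaussianMGF (Z i) ((‖(1 : ℝ) - 0‖₊ / 2) ^ 2) μ) →
      μ.real {ω | ε ≤ ∑ i ∈ s, Z i ω} ≤ Real.exp (-2 * ε ^ 2 / #s) := by
    intro Z hZ hZ_subG
    refine (HasSubgaussianMGF.measure_sum_ge_le_of_iIndepFun hZ hZ_subG hε).trans_eq ?_
    congr 1
    simp only [sub_zero, nnnorm_one, sum_const, nsmul_eq_mul, NNReal.coe_mul, NNReal.coe_natCast,
      NNReal.coe_pow, NNReal.coe_div, NNReal.coe_one, NNReal.coe_ofNat]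
    ring
  have h_upper := h_tail _ h_indep' h_subG
  have h_lower := h_tail _ (h_indep'.comp (fun _ x ↦ -x) fun _ ↦ measurable_neg)
    fun i hi ↦ (h_subG i hi).neg
  calc μ.real {ω | ε ≤ |∑ i ∈ s, (X i ω - μ[X i])|}
      ≤ μ.real ({ω | ε ≤ ∑ i ∈ s, (X i ω - μ[X i])} ∪
          {ω | ε ≤ ∑ i ∈ s, -(X i ω - μ[X i])}) := by
        refine measureReal_mono (fun ω hω ↦ ?_)
        rw [Set.mem_union, Set.mem_ofPred_eq, Set.mem_ofPred_eq, sum_neg_distrib]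
        exact le_abs.1 hω
    _ ≤ 2 * Real.exp (-2 * ε ^ 2 / #s) :=
        (measureReal_union_le _ _).trans (by simp only [Function.comp_apply] at h_lower; linarith)

end ProbabilityTheory

namespace MeasureTheory

variable {Ω ι : Type*} [MeasurableSpace Ω] {μ : Measure Ω}

lemma one_sub_sum_le_measureReal_biInter [IsProbabilityMeasure μ] {s : Finset ι}
    {A : ι → Set Ω} {r : ι → ℝ} (h : ∀ i ∈ s, μ.real (A i)ᶜ ≤ r i) :
    1 - ∑ i ∈ s, r i ≤ μ.real (⋂ i ∈ s, A i) := by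
  have h_compl : μ.real (⋂ i ∈ s, A i)ᶜ ≤ ∑ i ∈ s, r i := by
    rw [Set.compl_iInter₂]
    exact (measureReal_biUnion_finset_le s _).trans (sum_le_sum h)
  have h_one : 1 ≤ μ.real (⋂ i ∈ s, A i) + μ.real (⋂ i ∈ s, A i)ᶜ := by
    have h := measureReal_union_le (μ := μ) (⋂ i ∈ s, A i) (⋂ i ∈ s, A i)ᶜ
    rwa [Set.union_compl_self, probReal_univ] at h
  linarith

lemma integral_comp_eq_sum_of_map_eq_sum_dirac {α : Type*} [MeasurableSpace α]
    [MeasurableSingletonClass α] {W : Ω → α} (hW : Measurable W) {s : Finset ι} {w : ι → ℝ}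
    (hw : ∀ i ∈ s, 0 ≤ w i) {x : ι → α}
    (hmap : μ.map W = ∑ i ∈ s, ENNReal.ofReal (w i) • Measure.dirac (x i))
    {g : α → ℝ} (hg : Measurable g) :
    ∫ ω, g (W ω) ∂μ = ∑ i ∈ s, w i * g (x i) := by
  rw [← integral_map hW.aemeasurable hg.aestronglyMeasurable, hmap,
    integral_finsetSum_measure fun i _ ↦
      (integrable_dirac enorm_lt_top).smul_measure ENNReal.ofReal_ne_top]
  refine sum_congr rfl fun i hi ↦ ?_
  rw [integral_smul_measure, integral_dirac, ENNReal.toReal_ofReal (hw i hi), smul_eq_mul]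

end MeasureTheory

lemma truncAt_self (p : ℕ → ℝ) (k c : ℕ) : truncAt p k c c = ∑ j ∈ Icc c k, p j := if_pos rfl

lemma truncAt_of_ne (p : ℕ → ℝ) {k c j : ℕ} (hj : j ≠ c) : truncAt p k c j = p j := if_neg hj

lemma truncAt_nonneg {p : ℕ → ℝ} {k c j : ℕ} (hp : ∀ i ∈ Icc 1 k, 0 ≤ p i) (hck : c ≤ k)
    (hj : j ∈ Icc 1 c) : 0 ≤ truncAt p k c j := by
  rw [mem_Icc] at hj
  by_cases hjc : j = c
  · rw [hjc, truncAt_self]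
    exact sum_nonneg fun i hi ↦ hp i (by simp only [mem_Icc] at hi ⊢; omega)
  · rw [truncAt_of_ne p hjc]
    exact hp j (by simp only [mem_Icc]; omega)

lemma sum_Icc_truncAt (p : ℕ → ℝ) {k b c : ℕ} (hbc : b ≤ c) (hck : c ≤ k) :
    ∑ j ∈ Icc b c, truncAt p k c j = ∑ j ∈ Icc b k, p j := by
  have h_split : Icc b k = Ico b c ∪ Icc c k := by
    ext j; simp only [mem_union, mem_Ico, mem_Icc]; omega
  rw [← Ico_insert_right hbc, sum_insert (by simp), truncAt_self, h_split,
    sum_union (disjoint_left.2 fun j hj hj' ↦ by simp only [mem_Ico, mem_Icc] at hj hj'; omega),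
    add_comm]
  congr 1
  exact sum_congr rfl fun j hj ↦ truncAt_of_ne p (mem_Ico.1 hj).2.ne

lemma truncAt_eq_sub_of_lt (p : ℕ → ℝ) {k c j : ℕ} (hjc : j < c) (hck : c ≤ k) :
    truncAt p k c j = ∑ i ∈ Icc j k, p i - ∑ i ∈ Icc (j + 1) k, p i := by
  rw [truncAt_of_ne p hjc.ne, ← insert_Icc_add_one_left_eq_Icc (hjc.le.trans hck),
    sum_insert (by simp)]
  ring

lemma sum_abs_truncAt_sub_le (u v : ℕ → ℝ) {k c : ℕ} (hc : 1 ≤ c) (hck : c ≤ k) {s : ℝ}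
    (h : ∀ b ∈ Icc 1 c, |∑ j ∈ Icc b k, u j - ∑ j ∈ Icc b k, v j| ≤ s) :
    ∑ b ∈ Icc 1 c, |truncAt u k c b - truncAt v k c b| ≤ (2 * c - 1) * s := by
  have h_top : |truncAt u k c c - truncAt v k c c| ≤ s := by
    rw [truncAt_self, truncAt_self]
    exact h c (by simp [hc])
  have h_lower : ∀ b ∈ Ico 1 c, |truncAt u k c b - truncAt v k c b| ≤ 2 * s := by
    intro b hb
    rw [mem_Ico] at hb
    rw [truncAt_eq_sub_of_lt u hb.2 hck, truncAt_eq_sub_of_lt v hb.2 hck]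
    have h_b := h b (by simp only [mem_Icc]; omega)
    have h_succ := h (b + 1) (by simp only [mem_Icc]; omega)
    calc _ = |(∑ j ∈ Icc b k, u j - ∑ j ∈ Icc b k, v j)
            - (∑ j ∈ Icc (b + 1) k, u j - ∑ j ∈ Icc (b + 1) k, v j)| := by congr 1; ring
      _ ≤ _ := (abs_sub _ _).trans (by linarith)
  rw [← Ico_insert_right hc, sum_insert (by simp)]
  have h_sum := sum_le_card_nsmul _ _ _ h_lower
  rw [Nat.card_Ico, nsmul_eq_mul, Nat.cast_sub hc, Nat.cast_one] at h_sum
  linarith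

lemma censoredRec_one_one (f e : ℕ → ℝ) : censoredRec f e 1 1 = 1 := by simp [censoredRec]

lemma censoredRec_succ_self (f e : ℕ → ℝ) {c : ℕ} (hc : 1 ≤ c) :
    censoredRec f e (c + 1) (c + 1) = min (censoredRec f e c c) (f (c + 1) + e (c + 1)) := by
  obtain ⟨d, rfl⟩ := Nat.exists_eq_add_of_le' hc
  simp [censoredRec]

lemma censoredRec_succ_self_left (f e : ℕ → ℝ) {c : ℕ} (hc : 1 ≤ c) :
    censoredRec f e (c + 1) c = censoredRec f e c c - censoredRec f e (c + 1) (c + 1) := by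
  obtain ⟨d, rfl⟩ := Nat.exists_eq_add_of_le' hc
  simp [censoredRec]

lemma censoredRec_succ_of_lt (f e : ℕ → ℝ) {c b : ℕ} (hbc : b < c) :
    censoredRec f e (c + 1) b = censoredRec f e c b := by
  obtain ⟨d, rfl⟩ := Nat.exists_eq_add_of_lt hbc
  rw [censoredRec]
  exact (if_neg (by omega)).trans (if_neg (by omega))

/-- Step `k → k + 1` only moves mass from atom `k` to atom `k + 1`. -/
lemma censoredRec_sum_Icc (f e : ℕ → ℝ) {b k : ℕ} (hb : 1 ≤ b) (hbk : b ≤ k) :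
    ∑ j ∈ Icc b k, censoredRec f e k j = censoredRec f e b b := by
  induction k, hbk using Nat.le_induction with
  | base => simp
  | succ k hbk ih =>
    have h_step : ∀ j ∈ Icc b k, censoredRec f e (k + 1) j
        = censoredRec f e k j - if j = k then censoredRec f e (k + 1) (k + 1) else 0 := by
      intro j hj
      rcases (mem_Icc.1 hj).2.lt_or_eq with hjk | rfl
      · rw [censoredRec_succ_of_lt f e hjk, if_neg hjk.ne, sub_zero]
      · rw [censoredRec_succ_self_left f e (hb.trans hbk), if_pos rfl]
    rw [sum_Icc_succ_top (by omega), sum_congr rfl h_step, sum_sub_distrib, ih,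
      sum_ite_eq' (Icc b k), if_pos (by simp [hbk])]
    ring

section Deterministic

variable {k : ℕ} {p f e : ℕ → ℝ}

lemma le_censoredRec_self (hp : ∀ i ∈ Icc 1 k, 0 ≤ p i) (hp1 : ∑ i ∈ Icc 1 k, p i = 1)
    (hf : ∀ c ∈ Icc 1 k, |f c - ∑ i ∈ Icc c k, p i| ≤ e c) {c : ℕ} (hc1 : 1 ≤ c) (hck : c ≤ k) :
    ∑ i ∈ Icc c k, p i ≤ censoredRec f e c c := by
  induction c, hc1 using Nat.le_induction with
  | base => rw [censoredRec_one_one, hp1]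
  | succ c hc1 ih =>
    have h_anti : ∑ i ∈ Icc (c + 1) k, p i ≤ ∑ i ∈ Icc c k, p i := by
      rw [← insert_Icc_add_one_left_eq_Icc (by omega : c ≤ k), sum_insert (by simp)]
      linarith [hp c (by simp only [mem_Icc]; omega)]
    have h_est := (abs_le.1 (hf (c + 1) (by simp only [mem_Icc]; omega))).1
    rw [censoredRec_succ_self f e hc1]
    exact le_min (h_anti.trans (ih (by omega))) (by linarith)

lemma censoredRec_self_le (hp1 : ∑ i ∈ Icc 1 k, p i = 1)
    (hf : ∀ c ∈ Icc 1 k, |f c - ∑ i ∈ Icc c k, p i| ≤ e c) {c : ℕ} (hc : c ∈ Icc 1 k) :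
    censoredRec f e c c ≤ ∑ i ∈ Icc c k, p i + 2 * e c := by
  have h_est := abs_le.1 (hf c hc)
  rcases (mem_Icc.1 hc).1.eq_or_lt with rfl | hc1
  · rw [censoredRec_one_one, hp1]
    linarith
  · obtain ⟨d, rfl⟩ := Nat.exists_eq_add_of_lt hc1
    rw [censoredRec_succ_self f e (by omega)]
    exact (min_le_right _ _).trans (by linarith)

lemma sum_Icc_le_sum_Icc_censoredRec (hp : ∀ i ∈ Icc 1 k, 0 ≤ p i)
    (hp1 : ∑ i ∈ Icc 1 k, p i = 1) (hf : ∀ c ∈ Icc 1 k, |f c - ∑ i ∈ Icc c k, p i| ≤ e c)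
    {b : ℕ} (hb : b ∈ Icc 1 k) :
    ∑ j ∈ Icc b k, p j ≤ ∑ j ∈ Icc b k, censoredRec f e k j := by
  obtain ⟨hb1, hbk⟩ := mem_Icc.1 hb
  rw [censoredRec_sum_Icc f e hb1 hbk]
  exact le_censoredRec_self hp hp1 hf hb1 hbk

lemma tv_truncAt_censoredRec_lt (hp : ∀ i ∈ Icc 1 k, 0 ≤ p i)
    (hp1 : ∑ i ∈ Icc 1 k, p i = 1) (hf : ∀ c ∈ Icc 1 k, |f c - ∑ i ∈ Icc c k, p i| ≤ e c)
    {c : ℕ} (hc : c ∈ Icc 1 k) {s : ℝ} (hs : 0 < s) (he : ∀ b ∈ Icc 1 c, 2 * e b ≤ s) :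
    (1 / 2) * ∑ b ∈ Icc 1 c, |truncAt (censoredRec f e k) k c b - truncAt p k c b| < k * s := by
  obtain ⟨hc1, hck⟩ := mem_Icc.1 hc
  have h_close : ∀ b ∈ Icc 1 c,
      |∑ j ∈ Icc b k, censoredRec f e k j - ∑ j ∈ Icc b k, p j| ≤ s := by
    intro b hb
    obtain ⟨hb1, hbc⟩ := mem_Icc.1 hb
    have h_lower := le_censoredRec_self hp hp1 hf hb1 (hbc.trans hck)
    have h_upper := censoredRec_self_le hp1 hf (mem_Icc.2 ⟨hb1, hbc.trans hck⟩)
    rw [censoredRec_sum_Icc f e hb1 (hbc.trans hck), abs_le]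
    constructor <;> linarith [he b hb]
  have h_sum := sum_abs_truncAt_sub_le _ _ hc1 hck h_close
  have h_ck : (c : ℝ) * s ≤ k * s := by gcongr
  linarith

end Deterministic

section Sampling

variable {Ω : Type*} [MeasurableSpace Ω] {P : Measure Ω} {k : ℕ} {a p : ℕ → ℝ}

lemma integral_ite_le_eq_sum_Icc (ha : StrictMonoOn a (Icc 1 k)) (hp : ∀ i ∈ Icc 1 k, 0 ≤ p i)
    {W : Ω → ℝ} (hW : Measurable W) {b c : ℕ} (hc : 1 ≤ c) (hcb : c ≤ b) (hbk : b ≤ k)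
    (hmap : P.map W = ∑ i ∈ Icc 1 b, ENNReal.ofReal (truncAt p k b i) • Measure.dirac (a i)) :
    ∫ ω, (if a c ≤ W ω then (1 : ℝ) else 0) ∂P = ∑ i ∈ Icc c k, p i := by
  rw [integral_comp_eq_sum_of_map_eq_sum_dirac hW (fun i hi ↦ truncAt_nonneg hp hbk hi) hmap
    (g := fun y ↦ if a c ≤ y then (1 : ℝ) else 0)
    (Measurable.ite (measurableSet_le measurable_const measurable_id) measurable_const
      measurable_const)]
  have h_filter : (Icc 1 b).filter (fun i ↦ a c ≤ a i) = Icc c b := by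
    rw [filter_congr fun i hi ↦ ha.le_iff_le (by simp; omega) (by simp at hi ⊢; omega)]
    ext i
    simp only [mem_filter, mem_Icc]
    omega
  simp only [mul_ite, mul_one, mul_zero]
  rw [← sum_filter, h_filter, sum_Icc_truncAt p hcb hbk]

/-- Each of the `n` samples censored at a level `b ≥ c` yields an independent indicator of
`X ≥ a_c`, of mean `q_c`. -/
lemma measureReal_lt_abs_empirical_sub_sum_Icc_le [IsProbabilityMeasure P]
    (ha : StrictMonoOn a (Icc 1 k)) (hp : ∀ i ∈ Icc 1 k, 0 ≤ p i) {m : ℕ → ℕ}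
    {Y : ℕ → ℕ → Ω → ℝ} (hYmeas : ∀ b j, Measurable (Y b j))
    (hYindep : iIndepFun (fun bj : ℕ × ℕ ↦ Y bj.1 bj.2) P)
    (hYdist : ∀ b ∈ Icc 1 k, ∀ j ∈ range (m b),
      P.map (Y b j) = ∑ i ∈ Icc 1 b, ENNReal.ofReal (truncAt p k b i) • Measure.dirac (a i))
    {c : ℕ} (hc : c ∈ Icc 1 k) {n : ℕ} (hn : n = ∑ b ∈ Icc c k, m b) (hn0 : 0 < n)
    {ε : ℝ} (hε : 0 ≤ ε) :
    P.real {ω | ε < |(1 / (n : ℝ)) * ∑ b ∈ Icc c k, ∑ j ∈ range (m b),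
        (if a c ≤ Y b j ω then (1 : ℝ) else 0) - ∑ i ∈ Icc c k, p i|}
      ≤ 2 * Real.exp (-2 * n * ε ^ 2) := by
  obtain ⟨hc1, hck⟩ := mem_Icc.1 hc
  set X : (Σ _ : ℕ, ℕ) → Ω → ℝ := fun x ω ↦ if a c ≤ Y x.1 x.2 ω then 1 else 0
  set s := (Icc c k).sigma fun b ↦ range (m b)
  have hX_meas : ∀ x, Measurable (X x) := fun x ↦
    Measurable.ite (measurableSet_le measurable_const (hYmeas _ _)) measurable_const
      measurable_const
  have hX_indep : iIndepFun X P :=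
    (hYindep.precomp (Equiv.sigmaEquivProd ℕ ℕ).injective).comp
      (fun _ y ↦ if a c ≤ y then (1 : ℝ) else 0) fun _ ↦
        Measurable.ite (measurableSet_le measurable_const measurable_id) measurable_const
          measurable_const
  have hX_bdd : ∀ x ω, X x ω ∈ Set.Icc (0 : ℝ) 1 := fun x ω ↦ by
    simp only [X]; split_ifs <;> simp
  have hX_mean : ∀ x ∈ s, P[X x] = ∑ i ∈ Icc c k, p i := by
    rintro ⟨b, j⟩ hx
    obtain ⟨hb, hj⟩ := mem_sigma.1 hx
    obtain ⟨hcb, hbk⟩ := mem_Icc.1 hb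
    exact integral_ite_le_eq_sum_Icc ha hp (hYmeas b j) hc1 hcb hbk
      (hYdist b (mem_Icc.2 ⟨hc1.trans hcb, hbk⟩) j hj)
  have h_card : #s = n := by simp [s, card_sigma, hn]
  have h_sum : ∀ ω, ∑ x ∈ s, (X x ω - P[X x]) = n * ((1 / (n : ℝ)) *
      ∑ b ∈ Icc c k, ∑ j ∈ range (m b), (if a c ≤ Y b j ω then (1 : ℝ) else 0)
        - ∑ i ∈ Icc c k, p i) := by
    intro ω
    rw [sum_sub_distrib, sum_congr rfl hX_mean, sum_const, h_card, nsmul_eq_mul, sum_sigma]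
    field_simp
    rfl
  have hn_pos : (0 : ℝ) < n := by exact_mod_cast hn0
  calc _ ≤ P.real {ω | n * ε ≤ |∑ x ∈ s, (X x ω - P[X x])|} := by
        refine measureReal_mono fun ω hω ↦ ?_
        rw [Set.mem_ofPred_eq, h_sum, abs_mul, abs_of_pos hn_pos]
        exact mul_le_mul_of_nonneg_left hω.le hn_pos.le
    _ ≤ 2 * Real.exp (-2 * (n * ε) ^ 2 / #s) :=
        measureReal_le_abs_sum_sub_integral_le hX_indep hX_meas hX_bdd s (by positivity)
    _ = 2 * Real.exp (-2 * n * ε ^ 2) := by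
        rw [h_card]
        field_simp

end Sampling

lemma two_mul_exp_neg_two_mul_sqrt_log_div_sq {n : ℕ} (hn : 0 < n) {K δ : ℝ} (hK : 0 < K)
    (hδ : 0 < δ) (hL : 0 ≤ Real.log (2 * K / δ)) :
    2 * Real.exp (-2 * n * √(Real.log (2 * K / δ) / (2 * n)) ^ 2) = δ / K := by
  have hn' : (0 : ℝ) < n := by exact_mod_cast hn
  rw [Real.sq_sqrt (by positivity),
    show -2 * (n : ℝ) * (Real.log (2 * K / δ) / (2 * n)) = -Real.log (2 * K / δ) by field_simp,
    Real.exp_neg, Real.exp_log (by positivity)]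
  field_simp

lemma two_mul_sqrt_div_le_sqrt {L : ℝ} (hL : 0 ≤ L) {m n : ℕ} (hm : 0 < m) (hmn : m ≤ n) :
    2 * √(L / (2 * n)) ≤ √(2 * L / m) := by
  have hm' : (0 : ℝ) < m := by exact_mod_cast hm
  have hmn' : (m : ℝ) ≤ n := by exact_mod_cast hmn
  rw [Real.le_sqrt (by positivity) (by positivity), mul_pow, Real.sq_sqrt (by positivity)]
  calc 2 ^ 2 * (L / (2 * n)) = 2 * L / n := by field_simp
    _ ≤ 2 * L / m := div_le_div_of_nonneg_left (by positivity) hm' hmn'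

/-- sampling under censored feedback. Let `D` be a distribution on
values `a_1 < ⋯ < a_k` with pmf `p`. For each level `c ∈ [k]` we observe `m_c` i.i.d.
censored samples `Y c j ~ min(X, a_c)` with `X ~ D`, all mutually independent.
With `n_c = ∑_{b ≥ c} m_b` effective samples at level `c`, `phat_c` the fraction of the
`n_c` effective samples equal to `a_c` (i.e. whose underlying value is `≥ a_c`), and
`eps_c = √(log(2k/δ)/(2 n_c))`, let `E = E_k` be the output of the censored-feedback
recursion. Then with probability at least `1 - δ`: (i) `E` stochastically dominates `p`,
and (ii) for every `c ∈ [k]`, the total variation distance between the truncations at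
`a_c` of `E` and of `p` is less than `k √(2 log(2k/δ)/m_c)`. -/
theorem censoredRec_sampling_dominates_and_close
    (Ω : Type*) [MeasurableSpace Ω] (P : Measure Ω) [IsProbabilityMeasure P]
    (k : ℕ) (hk : 1 ≤ k)
    (a : ℕ → ℝ) (ha : ∀ i ∈ Finset.Icc 1 k, ∀ j ∈ Finset.Icc 1 k, i < j → a i < a j)
    (p : ℕ → ℝ)
    (hp : ∀ i ∈ Finset.Icc 1 k, 0 ≤ p i ∧ p i ≤ 1)
    (hp1 : ∑ i ∈ Finset.Icc 1 k, p i = 1)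
    (m : ℕ → ℕ) (hm : ∀ c ∈ Finset.Icc 1 k, 1 ≤ m c)
    (Y : ℕ → ℕ → Ω → ℝ) (hYmeas : ∀ c j, Measurable (Y c j))
    (hYindep : iIndepFun (fun cj : ℕ × ℕ => Y cj.1 cj.2) P)
    (hYdist : ∀ c ∈ Finset.Icc 1 k, ∀ j ∈ Finset.range (m c),
      Measure.map (Y c j) P
        = ∑ i ∈ Finset.Icc 1 c, ENNReal.ofReal (truncAt p k c i) • Measure.dirac (a i))
    (δ : ℝ) (hδ0 : 0 < δ) (hδ1 : δ < 1)
    (n : ℕ → ℕ) (hn : ∀ c, n c = ∑ b ∈ Finset.Icc c k, m b)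
    (phat : Ω → ℕ → ℝ)
    (hphat : ∀ ω c, phat ω c
      = (1 / (n c : ℝ)) *
          ∑ b ∈ Finset.Icc c k, ∑ j ∈ Finset.range (m b),
            (if a c ≤ Y b j ω then (1 : ℝ) else 0))
    (eps : ℕ → ℝ)
    (heps : ∀ c, eps c = Real.sqrt (Real.log (2 * k / δ) / (2 * (n c : ℝ))))
    (E : Ω → ℕ → ℝ) (hE : ∀ ω, E ω = censoredRec (phat ω) eps k) :
    ENNReal.ofReal (1 - δ) ≤
      P {ω | (∀ b ∈ Finset.Icc 1 k,
                ∑ j ∈ Finset.Icc b k, p j ≤ ∑ j ∈ Finset.Icc b k, E ω j) ∧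
             (∀ c ∈ Finset.Icc 1 k,
                (1 / 2) * ∑ b ∈ Finset.Icc 1 c, |truncAt (E ω) k c b - truncAt p k c b|
                  < k * Real.sqrt (2 * Real.log (2 * k / δ) / (m c : ℝ)))} := by
  have hk1 : (1 : ℝ) ≤ k := by exact_mod_cast hk
  have hk0 : (0 : ℝ) < k := by linarith
  have hL : 0 < Real.log (2 * k / δ) := Real.log_pos (by rw [lt_div_iff₀ hδ0]; linarith)
  have hp0 : ∀ i ∈ Icc 1 k, 0 ≤ p i := fun i hi ↦ (hp i hi).1
  have hmn : ∀ b c, b ≤ c → c ∈ Icc 1 k → m c ≤ n b := fun b c hbc hc ↦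
    hn b ▸ single_le_sum (fun _ _ ↦ Nat.zero_le _) (mem_Icc.2 ⟨hbc, (mem_Icc.1 hc).2⟩)
  have hn0 : ∀ c ∈ Icc 1 k, 0 < n c := fun c hc ↦ (hm c hc).trans (hmn c c le_rfl hc)
  set G := ⋂ c ∈ Icc 1 k, {ω | |phat ω c - ∑ i ∈ Icc c k, p i| ≤ eps c}
  have hG : 1 - δ ≤ P.real G := by
    refine le_of_eq_of_le ?_ (one_sub_sum_le_measureReal_biInter (r := fun _ ↦ δ / k) ?_)
    · rw [sum_const, Nat.card_Icc, nsmul_eq_mul, Nat.add_sub_cancel, mul_div_cancel₀ _ hk0.ne']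
    · intro c hc
      rw [← two_mul_exp_neg_two_mul_sqrt_log_div_sq (hn0 c hc) hk0 hδ0 hL.le, Set.compl_ofPred]
      simp only [not_le, hphat, heps]
      exact measureReal_lt_abs_empirical_sub_sum_Icc_le (fun i hi j hj ↦ ha i hi j hj) hp0
        hYmeas hYindep hYdist hc (hn c) (hn0 c hc) (Real.sqrt_nonneg _)
  refine (ENNReal.ofReal_le_ofReal hG).trans (Eq.trans_le ofReal_measureReal (measure_mono ?_))
  intro ω hω
  have hf : ∀ c ∈ Icc 1 k, |phat ω c - ∑ i ∈ Icc c k, p i| ≤ eps c := by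
    simpa only [G, Set.mem_iInter, Set.mem_ofPred_eq] using hω
  rw [Set.mem_ofPred_eq, hE ω]
  refine ⟨fun b hb ↦ sum_Icc_le_sum_Icc_censoredRec hp0 hp1 hf hb, fun c hc ↦
    tv_truncAt_censoredRec_lt hp0 hp1 hf hc
      (Real.sqrt_pos.2 (div_pos (by linarith) (by exact_mod_cast hm c hc))) fun b hb ↦ ?_⟩
  rw [heps]
  exact two_mul_sqrt_div_le_sqrt hL.le (hm c hc) (hmn b c (mem_Icc.1 hb).2 hc)
end

section
/- Let p be a probability vector on k ordered real values a_1 < ... < a_k with tail CDF q_c = \sum_{b \ge c} p_b. Fix numbers \hat{p}_1, ..., \hat{p}_k \in [0,1] and \epsilon_1, ..., \epsilon_k \ge 0 with |\hat{p}_c - q_c| \le \epsilon_c for every c \in [k], and let E = E_k be the output of the censored-feedback recursion. Then for every c \in [k], the tail probabilities of E and p at level c differ by at most 2\epsilon_c: |\sum_{j \ge c} E(j) - q_c| \le 2\epsilon_c. In particular, the total variation distance between the binary compressions at a_c of E and of p (the Bernoulli distributions of the indicator 1[X \ge a_c]) is at most 2\epsilon_c. -/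
open Finset

/-!
The step from `E_c` to `E_{c+1}` only splits the mass `E_c(c)` between the positions `c` and
`c + 1`, so the tail mass `∑_{j ≥ c} E_k(j)` equals the diagonal entry `E_c(c)`. The diagonal
entries satisfy `q_c ≤ E_c(c) ≤ q_c + 2ε_c`: the lower bound propagates by induction, since
`q_{c+1} ≤ q_c ≤ E_c(c)` and `q_{c+1} ≤ p̂_{c+1} + ε_{c+1}`; the upper bound is immediate from
`E_c(c) ≤ p̂_c + ε_c ≤ q_c + 2ε_c`.
-/

section CensoredRec

variable {phat eps : ℕ → ℝ}

lemma censoredRec_one_one_s14 : censoredRec phat eps 1 1 = 1 := by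
  simp [censoredRec]

lemma censoredRec_succ_self_s14 {m : ℕ} (hm : 1 ≤ m) :
    censoredRec phat eps (m + 1) (m + 1) =
      min (censoredRec phat eps m m) (phat (m + 1) + eps (m + 1)) := by
  obtain ⟨n, rfl⟩ := Nat.exists_eq_add_of_le' hm
  simp [censoredRec]

lemma censoredRec_succ_add_succ_self {m : ℕ} (hm : 1 ≤ m) :
    censoredRec phat eps (m + 1) m + censoredRec phat eps (m + 1) (m + 1) =
      censoredRec phat eps m m := by
  obtain ⟨n, rfl⟩ := Nat.exists_eq_add_of_le' hm
  simp [censoredRec]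

lemma censoredRec_succ_of_lt_s14 {m b : ℕ} (hm : 1 ≤ m) (hb : b < m) :
    censoredRec phat eps (m + 1) b = censoredRec phat eps m b := by
  obtain ⟨n, rfl⟩ := Nat.exists_eq_add_of_le' hm
  simp only [censoredRec, if_neg (show b ≠ n + 2 by omega), if_neg (show b ≠ n + 1 by omega)]

lemma sum_Icc_censoredRec {c m : ℕ} (hc : 1 ≤ c) (hcm : c ≤ m) :
    ∑ j ∈ Icc c m, censoredRec phat eps m j = censoredRec phat eps c c := by
  induction m, hcm using Nat.le_induction with
  | base => simp
  | succ m hcm ih =>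
    have hm : 1 ≤ m := hc.trans hcm
    rw [← ih, ← Ico_add_one_right_eq_Icc, ← Ico_add_one_right_eq_Icc,
      sum_Ico_succ_top (by omega), sum_Ico_succ_top hcm, sum_Ico_succ_top hcm, add_assoc,
      censoredRec_succ_add_succ_self hm]
    congr 1
    exact sum_congr rfl fun j hj => censoredRec_succ_of_lt_s14 hm (mem_Ico.mp hj).2

lemma censoredRec_self_le_s14 {c : ℕ} (hc : 2 ≤ c) :
    censoredRec phat eps c c ≤ phat c + eps c := by
  obtain ⟨m, rfl⟩ := Nat.exists_eq_add_of_le' hc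
  rw [censoredRec_succ_self_s14 (by omega)]
  exact min_le_right _ _

lemma le_censoredRec_self_s14 {q : ℕ → ℝ} {k : ℕ} (hq1 : q 1 ≤ 1) (hq : AntitoneOn q (Icc 1 k))
    (hlow : ∀ c ∈ Icc 2 k, q c ≤ phat c + eps c) :
    ∀ c ∈ Icc 1 k, q c ≤ censoredRec phat eps c c := by
  suffices ∀ c, 1 ≤ c → c ≤ k → q c ≤ censoredRec phat eps c c from
    fun c hc => this c (mem_Icc.mp hc).1 (mem_Icc.mp hc).2
  intro c hc
  induction c, hc using Nat.le_induction with
  | base => exact fun _ => by rwa [censoredRec_one_one_s14]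
  | succ c hc ih =>
    intro hck
    have hq_succ : q (c + 1) ≤ q c :=
      hq (mem_Icc.mpr ⟨hc, by omega⟩) (mem_Icc.mpr ⟨by omega, hck⟩) (Nat.le_succ c)
    rw [censoredRec_succ_self_s14 hc]
    exact le_min (hq_succ.trans (ih (by omega))) (hlow (c + 1) (mem_Icc.mpr ⟨by omega, hck⟩))

lemma abs_censoredRec_self_sub_le {q : ℕ → ℝ} {k : ℕ} (hq1 : q 1 = 1)
    (hq : AntitoneOn q (Icc 1 k)) (hclose : ∀ c ∈ Icc 1 k, |phat c - q c| ≤ eps c) :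
    ∀ c ∈ Icc 1 k, |censoredRec phat eps c c - q c| ≤ 2 * eps c := by
  intro c hc
  have hlow : ∀ d ∈ Icc 2 k, q d ≤ phat d + eps d := fun d hd => by
    linarith [(abs_sub_le_iff.mp (hclose d (Icc_subset_Icc_left (by norm_num) hd))).2]
  have hup : censoredRec phat eps c c ≤ q c + 2 * eps c := by
    have hclose_c := abs_sub_le_iff.mp (hclose c hc)
    rcases (mem_Icc.mp hc).1.eq_or_lt with rfl | hc2
    · rw [censoredRec_one_one_s14, hq1]
      linarith
    · linarith [censoredRec_self_le_s14 (phat := phat) (eps := eps) hc2]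
  have hge := le_censoredRec_self_s14 hq1.le hq hlow c hc
  rw [abs_le]
  constructor <;> linarith

end CensoredRec

theorem censoredRec_tail_close_general
    (k : ℕ)
    (p : ℕ → ℝ)
    (hp : ∀ i ∈ Finset.Icc 1 k, 0 ≤ p i ∧ p i ≤ 1)
    (hp1 : ∑ i ∈ Finset.Icc 1 k, p i = 1)
    (phat eps : ℕ → ℝ)
    (hclose : ∀ c ∈ Finset.Icc 1 k, |phat c - ∑ b ∈ Finset.Icc c k, p b| ≤ eps c) :
    ∀ c ∈ Finset.Icc 1 k,
      |(∑ j ∈ Finset.Icc c k, censoredRec phat eps k j) - ∑ b ∈ Finset.Icc c k, p b|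
        ≤ 2 * eps c := by
  have htail_anti : AntitoneOn (fun c => ∑ b ∈ Icc c k, p b) (Icc 1 k) :=
    fun c hc d _ hcd => sum_le_sum_of_subset_of_nonneg (Icc_subset_Icc_left hcd)
      fun i hi _ => (hp i (Icc_subset_Icc_left (mem_Icc.mp hc).1 hi)).1
  intro c hc
  rw [sum_Icc_censoredRec (mem_Icc.mp hc).1 (mem_Icc.mp hc).2]
  exact abs_censoredRec_self_sub_le hp1 htail_anti hclose c hc

/-- If `|phat_c - q_c| ≤ eps_c` for every `c ∈ [k]`, then the tail
probabilities of the output `E = E_k` of the censored-feedback recursion and of `p` differ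
at every level `c` by at most `2 eps_c`; i.e. the total variation distance between the
binary compressions at `a_c` of `E` and of `p` is at most `2 eps_c`. -/
theorem censoredRec_tail_close
    (k : ℕ) (hk : 1 ≤ k) (a : ℕ → ℝ)
    (ha : ∀ i ∈ Finset.Icc 1 k, ∀ j ∈ Finset.Icc 1 k, i < j → a i < a j)
    (p : ℕ → ℝ)
    (hp : ∀ i ∈ Finset.Icc 1 k, 0 ≤ p i ∧ p i ≤ 1)
    (hp1 : ∑ i ∈ Finset.Icc 1 k, p i = 1)
    (phat eps : ℕ → ℝ)
    (hphat : ∀ c ∈ Finset.Icc 1 k, 0 ≤ phat c ∧ phat c ≤ 1)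
    (heps : ∀ c ∈ Finset.Icc 1 k, 0 ≤ eps c)
    (hclose : ∀ c ∈ Finset.Icc 1 k, |phat c - ∑ b ∈ Finset.Icc c k, p b| ≤ eps c) :
    ∀ c ∈ Finset.Icc 1 k,
      |(∑ j ∈ Finset.Icc c k, censoredRec phat eps k j) - ∑ b ∈ Finset.Icc c k, p b|
        ≤ 2 * eps c :=
  censoredRec_tail_close_general k p hp hp1 phat eps hclose
end

section
/- Let D be a distribution on real values a_1 < ... < a_k with pmf p and tail CDF q_c = \sum_{b \ge c} p_b, and let \delta \in (0,1). For each c \in [k], suppose we observe m_c i.i.d. binary samples of the form 1[X \ge a_c] with X \sim D, all samples mutually independent; let \hat{p}_c be the empirical mean of these m_c binary samples, and set \epsilon_c = \sqrt{\log(2k/\delta)/(2 m_c)}. Let E = E_k be the output of the censored-feedback recursion with inputs \hat{p}_c and \epsilon_c. Then with probability at least 1 - \delta: (i) E stochastically dominates p, i.e. \sum_{j \ge b} E(j) \ge \sum_{j \ge b} p_j for every b \in [k]; and (ii) for every c \in [k], |\sum_{j \ge c} E(j) - q_c| < \sqrt{2 \log(2k/\delta)/m_c}, i.e., the total variation distance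 between the binary compressions at a_c of E and of p is less than \sqrt{2 \log(2k/\delta)/m_c}. -/
open Finset MeasureTheory ProbabilityTheory

/-!
On the event that every empirical tail `phat c` is within `eps c` of the true tail
`q c = ∑_{b ≥ c} p b`, the conclusion is deterministic: the tail sums of the recursion are the
running minima of `1` and `phat b + eps b` over `2 ≤ b ≤ c`, and since `q` is non-increasing
with `q 1 = 1` they lie in `[q c, q c + 2 eps c)`; and `2 eps c` is exactly the claimed radius.
By Hoeffding's inequality (two-sided, `m c` samples in `[0, 1]`) that event fails at level `c`
with probability at most `2 exp (-2 m c eps c ^ 2) = δ / k`, so by a union bound it fails with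
probability at most `δ`.
-/

section CensoredTail

variable (phat eps : ℕ → ℝ)

/-- The tail mass `∑_{j ≥ c} E_n(j)` of the recursion, the same for every `n ≥ c`
(see `sum_Icc_censoredRec`); the value at `0` is a placeholder. -/
noncomputable def censoredTail : ℕ → ℝ
  | 0 => 1
  | 1 => 1
  | (n + 2) => min (censoredTail (n + 1)) (phat (n + 2) + eps (n + 2))

@[simp] lemma censoredTail_one : censoredTail phat eps 1 = 1 := rfl

lemma censoredTail_succ {n : ℕ} (hn : 1 ≤ n) :
    censoredTail phat eps (n + 1) = min (censoredTail phat eps n) (phat (n + 1) + eps (n + 1)) := by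
  obtain ⟨n, rfl⟩ := Nat.exists_eq_add_of_le' hn
  rfl

lemma censoredTail_le {c : ℕ} (hc : 2 ≤ c) : censoredTail phat eps c ≤ phat c + eps c := by
  obtain ⟨n, rfl⟩ : ∃ n, c = n + 2 := ⟨c - 2, by omega⟩
  exact min_le_right _ _

lemma censoredRec_eq_censoredTail {n : ℕ} (hn : 1 ≤ n) :
    censoredRec phat eps n n = censoredTail phat eps n ∧
      ∀ j, 1 ≤ j → j < n →
        censoredRec phat eps n j = censoredTail phat eps j - censoredTail phat eps (j + 1) := by
  induction n, hn using Nat.le_induction with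
  | base => exact ⟨rfl, fun j _ _ => by omega⟩
  | succ n hn ih =>
    obtain ⟨c, rfl⟩ := Nat.exists_eq_add_of_le' hn
    have htop := censoredTail_succ phat eps (Nat.le_add_left 1 c)
    refine ⟨by simp [censoredRec, htop, ih.1], fun j hj1 hj2 => ?_⟩
    rcases (by omega : j = c + 1 ∨ j < c + 1) with rfl | hj
    · simp [censoredRec, htop, ih.1]
    · change censoredRec phat eps (c + 2) j = _
      simp only [censoredRec]
      rw [if_neg (by omega), if_neg (by omega)]
      exact ih.2 j hj1 hj

lemma sum_Icc_censoredRec_s15 {b n : ℕ} (hb : 1 ≤ b) (hbn : b ≤ n) :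
    ∑ j ∈ Icc b n, censoredRec phat eps n j = censoredTail phat eps b := by
  obtain ⟨htop, hbelow⟩ := censoredRec_eq_censoredTail phat eps (hb.trans hbn)
  have hincrements : ∑ j ∈ Ico b n, censoredRec phat eps n j
      = -(censoredTail phat eps n - censoredTail phat eps b) := by
    rw [← sum_Ico_sub _ hbn, ← sum_neg_distrib]
    refine sum_congr rfl fun j hj => ?_
    rw [mem_Ico] at hj
    rw [hbelow j (hb.trans hj.1) hj.2, neg_sub]
  rw [← Ico_add_one_right_eq_Icc, sum_Ico_succ_top hbn, hincrements, htop]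
  ring

variable {phat eps}

lemma le_censoredTail {q : ℕ → ℝ} {n : ℕ} (hq1 : q 1 ≤ 1)
    (hq_anti : ∀ c, 1 ≤ c → c < n → q (c + 1) ≤ q c)
    (hq_le : ∀ c, 2 ≤ c → c ≤ n → q c ≤ phat c + eps c) :
    ∀ c, 1 ≤ c → c ≤ n → q c ≤ censoredTail phat eps c := by
  intro c hc
  induction c, hc using Nat.le_induction with
  | base => exact fun _ => hq1
  | succ c hc ih =>
    intro hcn
    rw [censoredTail_succ phat eps hc]
    exact le_min ((hq_anti c hc hcn).trans (ih (by omega))) (hq_le (c + 1) (by omega) hcn)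

theorem tail_censoredRec_mem_Ico {q : ℕ → ℝ} {n : ℕ} (hq1 : q 1 = 1)
    (hq_anti : ∀ c, 1 ≤ c → c < n → q (c + 1) ≤ q c)
    (hclose : ∀ c ∈ Icc 1 n, |phat c - q c| < eps c) {c : ℕ} (hc : c ∈ Icc 1 n) :
    ∑ j ∈ Icc c n, censoredRec phat eps n j ∈ Set.Ico (q c) (q c + 2 * eps c) := by
  have hlower c hc := (abs_sub_lt_iff.mp (hclose c hc)).2
  have hupper c hc := (abs_sub_lt_iff.mp (hclose c hc)).1
  rw [mem_Icc] at hc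
  rw [sum_Icc_censoredRec_s15 phat eps hc.1 hc.2]
  refine ⟨le_censoredTail hq1.le hq_anti (fun c hc hcn => ?_) c hc.1 hc.2, ?_⟩
  · linarith [hlower c (mem_Icc.mpr ⟨by omega, hcn⟩)]
  · rcases (by omega : c = 1 ∨ 2 ≤ c) with rfl | hc2
    · have := (abs_nonneg _).trans_lt (hclose 1 (mem_Icc.mpr hc))
      rw [censoredTail_one, hq1]
      linarith
    · linarith [censoredTail_le phat eps hc2, hupper c (mem_Icc.mpr hc)]

end CensoredTail

namespace ProbabilityTheory

variable {Ω : Type*} [MeasurableSpace Ω] {P : Measure Ω}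

lemma measureReal_sum_ge_le_of_mem_Icc [IsProbabilityMeasure P] {X : ℕ → Ω → ℝ}
    (hX_indep : iIndepFun X P) (hX_meas : ∀ i, AEMeasurable (X i) P) {a b μ : ℝ} {n : ℕ}
    (hX_mem : ∀ i < n, ∀ᵐ ω ∂P, X i ω ∈ Set.Icc a b) (hX_mean : ∀ i < n, P[X i] = μ)
    {ε : ℝ} (hε : 0 ≤ ε) :
    P.real {ω | ε ≤ ∑ i ∈ range n, (X i ω - μ)}
      ≤ Real.exp (-2 * ε ^ 2 / (n * (b - a) ^ 2)) := by
  have hsubG : ∀ i < n, HasSubgaussianMGF (fun ω => X i ω - μ) ((‖b - a‖₊ / 2) ^ 2) P :=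
    fun i hi => hX_mean i hi ▸ hasSubgaussianMGF_of_mem_Icc (hX_meas i) (hX_mem i hi)
  have hZ_indep : iIndepFun (fun i ω => X i ω - μ) P :=
    hX_indep.comp (fun _ x => x - μ) (fun _ => measurable_sub_const μ)
  refine (HasSubgaussianMGF.measure_sum_range_ge_le_of_iIndepFun hZ_indep hsubG hε).trans_eq ?_
  congr 1
  push_cast
  rw [Real.norm_eq_abs, div_pow, sq_abs,
    show 2 * (n : ℝ) * ((b - a) ^ 2 / 2 ^ 2) = n * (b - a) ^ 2 / 2 by ring, div_div_eq_mul_div]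
  ring

lemma measureReal_abs_sum_ge_le_of_mem_Icc [IsProbabilityMeasure P] {X : ℕ → Ω → ℝ}
    (hX_indep : iIndepFun X P) (hX_meas : ∀ i, AEMeasurable (X i) P) {a b μ : ℝ} {n : ℕ}
    (hX_mem : ∀ i < n, ∀ᵐ ω ∂P, X i ω ∈ Set.Icc a b) (hX_mean : ∀ i < n, P[X i] = μ)
    {ε : ℝ} (hε : 0 ≤ ε) :
    P.real {ω | ε ≤ |∑ i ∈ range n, (X i ω - μ)|}
      ≤ 2 * Real.exp (-2 * ε ^ 2 / (n * (b - a) ^ 2)) := by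
  have hupper := measureReal_sum_ge_le_of_mem_Icc hX_indep hX_meas hX_mem hX_mean hε
  have hlower := measureReal_sum_ge_le_of_mem_Icc (X := fun i ω => -X i ω) (a := -b) (b := -a)
    (hX_indep.comp (fun _ x => -x) (fun _ => measurable_neg)) (fun i => (hX_meas i).neg)
    (fun i hi => (hX_mem i hi).mono fun ω hω => ⟨neg_le_neg hω.2, neg_le_neg hω.1⟩)
    (fun i hi => (integral_neg (X i)).trans (congrArg Neg.neg (hX_mean i hi))) hε
  have hsubset : {ω | ε ≤ |∑ i ∈ range n, (X i ω - μ)|}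
      ⊆ {ω | ε ≤ ∑ i ∈ range n, (X i ω - μ)}
        ∪ {ω | ε ≤ ∑ i ∈ range n, (-X i ω - -μ)} := by
    intro ω hω
    have hsum_neg : ∑ i ∈ range n, (-X i ω - -μ) = -∑ i ∈ range n, (X i ω - μ) := by
      rw [← sum_neg_distrib]
      exact sum_congr rfl fun i _ => by ring
    simp only [Set.mem_union, Set.mem_ofPred_eq, hsum_neg] at hω ⊢
    exact le_abs.mp hω
  calc _ ≤ _ := measureReal_mono hsubset
    _ ≤ _ := measureReal_union_le _ _
    _ ≤ _ := add_le_add hupper hlower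
    _ = _ := by rw [neg_sub_neg, two_mul]

lemma ae_mem_Icc_of_map_eq {X : Ω → ℝ} (hX : AEMeasurable X P) {α β : ENNReal}
    (hmap : P.map X = α • Measure.dirac 0 + β • Measure.dirac 1) :
    ∀ᵐ ω ∂P, X ω ∈ Set.Icc (0 : ℝ) 1 := by
  refine (ae_map_iff hX (p := (· ∈ Set.Icc (0 : ℝ) 1)) measurableSet_Icc).mp ?_
  rw [hmap, ae_add_measure_iff]
  exact ⟨Measure.ae_smul_measure ((ae_dirac_iff measurableSet_Icc).mpr (by simp)) _,
    Measure.ae_smul_measure ((ae_dirac_iff measurableSet_Icc).mpr (by simp)) _⟩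

lemma integral_eq_of_map_eq {X : Ω → ℝ} (hX : AEMeasurable X P) {q : ℝ} (hq : 0 ≤ q)
    (hmap : P.map X
      = ENNReal.ofReal (1 - q) • Measure.dirac 0 + ENNReal.ofReal q • Measure.dirac 1) :
    P[X] = q := by
  calc P[X] = ∫ x, x ∂(P.map X) := (integral_map hX aestronglyMeasurable_id).symm
    _ = q := by
      rw [hmap, integral_add_measure, integral_smul_measure, integral_smul_measure,
        integral_dirac, integral_dirac]
      · simp [hq]
      all_goals exact (integrable_dirac (by simp)).smul_measure ENNReal.ofReal_ne_top

lemma measureReal_abs_mean_sub_ge_le_of_map_eq [IsProbabilityMeasure P] {X : ℕ → Ω → ℝ}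
    (hX_indep : iIndepFun X P) (hX_meas : ∀ i, Measurable (X i)) {q : ℝ} (hq : 0 ≤ q)
    {n : ℕ} (hn : 0 < n)
    (hX_law : ∀ i < n,
      P.map (X i)
        = ENNReal.ofReal (1 - q) • Measure.dirac 0 + ENNReal.ofReal q • Measure.dirac 1)
    {L : ℝ} (hL : 0 ≤ L) :
    P.real {ω | √(L / (2 * n)) ≤ |(n : ℝ)⁻¹ * ∑ i ∈ range n, X i ω - q|}
      ≤ 2 * Real.exp (-L) := by
  have hn' : (0 : ℝ) < n := Nat.cast_pos.mpr hn
  have hmean ω : (n : ℝ)⁻¹ * ∑ i ∈ range n, X i ω - q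
      = (n : ℝ)⁻¹ * ∑ i ∈ range n, (X i ω - q) := by
    rw [sum_sub_distrib, sum_const, card_range, nsmul_eq_mul]
    field_simp
  have hevent : {ω | √(L / (2 * n)) ≤ |(n : ℝ)⁻¹ * ∑ i ∈ range n, X i ω - q|}
      = {ω | n * √(L / (2 * n)) ≤ |∑ i ∈ range n, (X i ω - q)|} := by
    ext ω
    rw [Set.mem_ofPred_eq, Set.mem_ofPred_eq, hmean, abs_mul, abs_inv, Nat.abs_cast,
      ← div_eq_inv_mul, le_div_iff₀' hn']
  rw [hevent]
  refine (measureReal_abs_sum_ge_le_of_mem_Icc hX_indep (fun i => (hX_meas i).aemeasurable)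
    (fun i hi => ae_mem_Icc_of_map_eq (hX_meas i).aemeasurable (hX_law i hi))
    (fun i hi => integral_eq_of_map_eq (hX_meas i).aemeasurable hq (hX_law i hi))
    (by positivity)).trans_eq ?_
  rw [mul_pow, Real.sq_sqrt (by positivity), sub_zero, one_pow, mul_one]
  field_simp

lemma ofReal_one_sub_le_of_measureReal_le_div_card [IsProbabilityMeasure P] {ι : Type*}
    {s : Finset ι} {t : ι → Set Ω} {u : Set Ω} {δ : ℝ} (hδ : 0 ≤ δ)
    (ht : ∀ i ∈ s, P.real (t i) ≤ δ / #s) (hu : ∀ ω, (∀ i ∈ s, ω ∉ t i) → ω ∈ u) :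
    ENNReal.ofReal (1 - δ) ≤ P u := by
  have hunion : P.real (⋃ i ∈ s, t i) ≤ δ := by
    calc _ ≤ ∑ i ∈ s, P.real (t i) := measureReal_biUnion_finset_le _ _
      _ ≤ ∑ _i ∈ s, δ / #s := sum_le_sum ht
      _ ≤ δ := by
        rw [sum_const, nsmul_eq_mul]
        rcases (#s).eq_zero_or_pos with hs | hs
        · simpa [hs] using hδ
        · rw [mul_div_cancel₀ _ (by positivity)]
  have hcover := measureReal_union_le (μ := P) (⋃ i ∈ s, t i) (⋃ i ∈ s, t i)ᶜ
  rw [Set.union_compl_self, probReal_univ] at hcover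
  have hsub : (⋃ i ∈ s, t i)ᶜ ⊆ u := fun ω hω => hu ω fun i hi hωi =>
    hω (Set.mem_biUnion hi hωi)
  rw [← ofReal_measureReal]
  exact ENNReal.ofReal_le_ofReal (by linarith [measureReal_mono (μ := P) hsub])

end ProbabilityTheory

lemma sum_Icc_le_sum_Icc_of_le {p : ℕ → ℝ} {k c d : ℕ} (hp : ∀ i ∈ Icc 1 k, 0 ≤ p i)
    (hc : 1 ≤ c) (hcd : c ≤ d) : ∑ b ∈ Icc d k, p b ≤ ∑ b ∈ Icc c k, p b :=
  sum_le_sum_of_subset_of_nonneg (Icc_subset_Icc_left hcd)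
    fun i hi _ => hp i (by simp only [mem_Icc] at hi ⊢; omega)

lemma Real.sqrt_two_mul_div (x y : ℝ) : √(2 * x / y) = 2 * √(x / (2 * y)) := by
  rw [← Real.sqrt_mul_self zero_le_two, ← Real.sqrt_mul (by norm_num)]
  congr 1
  field_simp
  ring

theorem censoredRec_binary_sampling_dominates_and_close_general
    (Ω : Type*) [MeasurableSpace Ω] (P : Measure Ω) [IsProbabilityMeasure P]
    (k : ℕ) (hk : 1 ≤ k)
    (p : ℕ → ℝ)
    (hp : ∀ i ∈ Finset.Icc 1 k, 0 ≤ p i ∧ p i ≤ 1)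
    (hp1 : ∑ i ∈ Finset.Icc 1 k, p i = 1)
    (m : ℕ → ℕ) (hm : ∀ c ∈ Finset.Icc 1 k, 1 ≤ m c)
    (Y : ℕ → ℕ → Ω → ℝ) (hYmeas : ∀ c j, Measurable (Y c j))
    (hYindep : iIndepFun (fun cj : ℕ × ℕ => Y cj.1 cj.2) P)
    (hYdist : ∀ c ∈ Finset.Icc 1 k, ∀ j ∈ Finset.range (m c),
      Measure.map (Y c j) P
        = ENNReal.ofReal (1 - ∑ b ∈ Finset.Icc c k, p b) • Measure.dirac (0 : ℝ)
            + ENNReal.ofReal (∑ b ∈ Finset.Icc c k, p b) • Measure.dirac (1 : ℝ))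
    (δ : ℝ) (hδ0 : 0 < δ) (hδ1 : δ < 1)
    (phat : Ω → ℕ → ℝ)
    (hphat : ∀ ω c, phat ω c
      = (1 / (m c : ℝ)) * ∑ j ∈ Finset.range (m c), Y c j ω)
    (eps : ℕ → ℝ)
    (heps : ∀ c, eps c = Real.sqrt (Real.log (2 * k / δ) / (2 * (m c : ℝ))))
    (E : Ω → ℕ → ℝ) (hE : ∀ ω, E ω = censoredRec (phat ω) eps k) :
    ENNReal.ofReal (1 - δ) ≤
      P {ω | (∀ b ∈ Finset.Icc 1 k,
                ∑ j ∈ Finset.Icc b k, p j ≤ ∑ j ∈ Finset.Icc b k, E ω j) ∧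
             (∀ c ∈ Finset.Icc 1 k,
                |(∑ j ∈ Finset.Icc c k, E ω j) - ∑ b ∈ Finset.Icc c k, p b|
                  < Real.sqrt (2 * Real.log (2 * k / δ) / (m c : ℝ)))} := by
  set L := Real.log (2 * k / δ) with hL_def
  have hL : 0 < L := Real.log_pos <| (one_lt_div hδ0).mpr <| by
    have : (1 : ℝ) ≤ k := by exact_mod_cast hk
    linarith
  set q : ℕ → ℝ := fun c => ∑ b ∈ Icc c k, p b
  have hq_anti : ∀ c, 1 ≤ c → c < k → q (c + 1) ≤ q c := fun c hc _ =>
    sum_Icc_le_sum_Icc_of_le (fun i hi => (hp i hi).1) hc c.le_succ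
  have hq_nonneg : ∀ c ∈ Icc 1 k, 0 ≤ q c := fun c hc =>
    sum_nonneg fun i hi => (hp i (by simp only [mem_Icc] at hi hc ⊢; omega)).1
  have hbad : ∀ c ∈ Icc 1 k, P.real {ω | eps c ≤ |phat ω c - q c|} ≤ δ / #(Icc 1 k) := by
    intro c hc
    have hY_indep : iIndepFun (Y c) P :=
      hYindep.precomp (g := fun j => (c, j)) fun _ _ h => (Prod.mk.inj h).2
    simp only [heps, hphat, one_div, Nat.card_Icc, Nat.add_sub_cancel]
    refine (measureReal_abs_mean_sub_ge_le_of_map_eq hY_indep (hYmeas c) (hq_nonneg c hc)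
      (hm c hc) (fun j hj => hYdist c hc j (mem_range.mpr hj)) hL.le).trans_eq ?_
    rw [Real.exp_neg, hL_def, Real.exp_log (by positivity)]
    field_simp
  refine ofReal_one_sub_le_of_measureReal_le_div_card hδ0.le hbad fun ω hω => ?_
  have htail c (hc : c ∈ Icc 1 k) := hE ω ▸
    tail_censoredRec_mem_Ico hp1 hq_anti (fun c hc => by simpa using hω c hc) hc
  refine ⟨fun b hb => (htail b hb).1, fun c hc => ?_⟩
  obtain ⟨hlower, hupper⟩ := htail c hc
  rw [Real.sqrt_two_mul_div, ← heps, abs_sub_lt_iff]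
  constructor <;> linarith

/-- sampling under binary feedback. Let `D` be a distribution on
values `a_1 < ⋯ < a_k` with pmf `p` and tail CDF `q_c = ∑_{b ≥ c} p_b`. For each level
`c ∈ [k]` we observe `m_c` i.i.d. binary samples `Y c j ~ 1[X ≥ a_c]` with `X ~ D`,
all mutually independent. With `phat_c` the empirical mean of the `m_c` binary samples at
level `c` and `eps_c = √(log(2k/δ)/(2 m_c))`, let `E = E_k` be the output of the
censored-feedback recursion. Then with probability at least `1 - δ`: (i) `E`
stochastically dominates `p`, and (ii) for every `c ∈ [k]`,
`|∑_{j ≥ c} E j - q_c| < √(2 log(2k/δ)/m_c)`, i.e. the total variation distance between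
the binary compressions at `a_c` of `E` and of `p` is less than `√(2 log(2k/δ)/m_c)`. -/
theorem censoredRec_binary_sampling_dominates_and_close
    (Ω : Type*) [MeasurableSpace Ω] (P : Measure Ω) [IsProbabilityMeasure P]
    (k : ℕ) (hk : 1 ≤ k)
    (a : ℕ → ℝ) (ha : ∀ i ∈ Finset.Icc 1 k, ∀ j ∈ Finset.Icc 1 k, i < j → a i < a j)
    (p : ℕ → ℝ)
    (hp : ∀ i ∈ Finset.Icc 1 k, 0 ≤ p i ∧ p i ≤ 1)
    (hp1 : ∑ i ∈ Finset.Icc 1 k, p i = 1)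
    (m : ℕ → ℕ) (hm : ∀ c ∈ Finset.Icc 1 k, 1 ≤ m c)
    (Y : ℕ → ℕ → Ω → ℝ) (hYmeas : ∀ c j, Measurable (Y c j))
    (hYindep : iIndepFun (fun cj : ℕ × ℕ => Y cj.1 cj.2) P)
    (hYdist : ∀ c ∈ Finset.Icc 1 k, ∀ j ∈ Finset.range (m c),
      Measure.map (Y c j) P
        = ENNReal.ofReal (1 - ∑ b ∈ Finset.Icc c k, p b) • Measure.dirac (0 : ℝ)
            + ENNReal.ofReal (∑ b ∈ Finset.Icc c k, p b) • Measure.dirac (1 : ℝ))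
    (δ : ℝ) (hδ0 : 0 < δ) (hδ1 : δ < 1)
    (phat : Ω → ℕ → ℝ)
    (hphat : ∀ ω c, phat ω c
      = (1 / (m c : ℝ)) * ∑ j ∈ Finset.range (m c), Y c j ω)
    (eps : ℕ → ℝ)
    (heps : ∀ c, eps c = Real.sqrt (Real.log (2 * k / δ) / (2 * (m c : ℝ))))
    (E : Ω → ℕ → ℝ) (hE : ∀ ω, E ω = censoredRec (phat ω) eps k) :
    ENNReal.ofReal (1 - δ) ≤
      P {ω | (∀ b ∈ Finset.Icc 1 k,
                ∑ j ∈ Finset.Icc b k, p j ≤ ∑ j ∈ Finset.Icc b k, E ω j) ∧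
             (∀ c ∈ Finset.Icc 1 k,
                |(∑ j ∈ Finset.Icc c k, E ω j) - ∑ b ∈ Finset.Icc c k, p b|
                  < Real.sqrt (2 * Real.log (2 * k / δ) / (m c : ℝ)))} :=
  censoredRec_binary_sampling_dominates_and_close_general Ω P k hk p hp hp1 m hm Y hYmeas hYindep
    hYdist δ hδ0 hδ1 phat hphat eps heps E hE
end
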